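/- arXiv:2412.18261 — 6 statements merged into one kernel-verified Lean document; each statement's English description precedes it below -/
import Mathlib

section
/- Let d ∈ {1,2,3}, T > 0 and let γ, α, D, R₀ > 0. Let ψ, φ : [0,T] × ℝᵈ → ℝ be C² functions with ψ ≥ 0 and φ ≥ 0, such that there is a compact set K ⊂ ℝᵈ with supp ψ(t,·) ⊆ K for all t ∈ [0,T], and such that ∂_t ψ + ∇_x·[ψ φ(1-φ)(α∇_x φ - D∇_x ψ)] = R₀ ψ (1 - φ - ψ) holds on (0,T) × ℝᵈ. Then for all t ∈ [0,T], ∫_{ℝᵈ} ψ(t,x) dx ≤ e^{R₀ t} ∫_{ℝᵈ} ψ(0,x) dx. -/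
set_option maxHeartbeats 1000000

open MeasureTheory

/-- Divergence of a vector field on `ℝᵈ`: the sum of the coordinate-wise
partial derivatives, `(∇·F)(x) = ∑ᵢ ∂ᵢ Fᵢ(x)`. -/
noncomputable def ediv {d : ℕ} (F : EuclideanSpace ℝ (Fin d) → EuclideanSpace ℝ (Fin d))
    (x : EuclideanSpace ℝ (Fin d)) : ℝ :=
  ∑ i, fderiv ℝ F x (EuclideanSpace.single i 1) i

section AuxLemmas
open Set

lemma euclid_abs_coord_le {d : ℕ} (x : EuclideanSpace ℝ (Fin d)) (i : Fin d) : |x i| ≤ ‖x‖ := by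
  rw [EuclideanSpace.norm_eq]
  rw [← Real.sqrt_sq_eq_abs]
  apply Real.sqrt_le_sqrt
  have h1 : x i ^ 2 ≤ ∑ j, ‖x j‖ ^ 2 := by
    have := Finset.single_le_sum (f := fun j => ‖x j‖ ^ 2) (fun j _ => by positivity) (Finset.mem_univ i)
    simpa [Real.norm_eq_abs, sq_abs] using this
  simpa [sq_abs] using h1

lemma ediv_eq_zero_of_eventually_zero {d : ℕ} {F : EuclideanSpace ℝ (Fin d) → EuclideanSpace ℝ (Fin d)}
    {x : EuclideanSpace ℝ (Fin d)} (h : ∀ᶠ y in nhds x, F y = 0) : ediv F x = 0 := by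
  have : fderiv ℝ F x = fderiv ℝ (fun _ => (0 : EuclideanSpace ℝ (Fin d))) x :=
    Filter.EventuallyEq.fderiv_eq h
  simp [ediv, this]

lemma integral_ediv_eq_zero {n : ℕ}
    {F : EuclideanSpace ℝ (Fin (n+1)) → EuclideanSpace ℝ (Fin (n+1))}
    (hF : ContDiff ℝ 1 F) {K : Set (EuclideanSpace ℝ (Fin (n+1)))} (hK : IsCompact K)
    (hsupp : Function.support F ⊆ K) : ∫ x, ediv F x = 0 := by
  classical
  obtain ⟨R, hR⟩ := hK.isBounded.subset_closedBall 0
  have hKball : K ⊆ Metric.closedBall 0 |R| :=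
    hR.trans (Metric.closedBall_subset_closedBall (le_abs_self R))
  set B : ℝ := |R| + 1 with hBdef
  have hBgt : |R| < B := by simp [hBdef]
  have hFz : ∀ x, x ∉ K → F x = 0 := fun x hx =>
    Function.support_subset_iff'.mp hsupp x hx
  have hdivz : ∀ x, x ∉ K → ediv F x = 0 := by
    intro x hx
    apply ediv_eq_zero_of_eventually_zero
    have hmem : Kᶜ ∈ nhds x := hK.isClosed.isOpen_compl.mem_nhds hx
    filter_upwards [hmem] with y hy using hFz y hy
  have hcs : HasCompactSupport (ediv F) := HasCompactSupport.intro hK hdivz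
  have hdivcont : Continuous (ediv F) := by
    have h1 : Continuous (fderiv ℝ F) := hF.continuous_fderiv one_ne_zero
    exact continuous_finset_sum _ fun i _ =>
      ((EuclideanSpace.proj i).continuous.comp
        ((ContinuousLinearMap.apply ℝ _ (EuclideanSpace.single i (1:ℝ))).continuous.comp h1))
  letI : PartialOrder (EuclideanSpace ℝ (Fin (n+1))) :=
    PartialOrder.lift (fun x => x.ofLp) (WithLp.ofLp_injective 2)
  set eL : EuclideanSpace ℝ (Fin (n+1)) ≃L[ℝ] (Fin (n+1) → ℝ) :=
    EuclideanSpace.equiv (Fin (n+1)) ℝ with heL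
  set a : EuclideanSpace ℝ (Fin (n+1)) := eL.symm (fun _ => -B) with ha
  set b : EuclideanSpace ℝ (Fin (n+1)) := eL.symm (fun _ => B) with hb
  have hcoord : ∀ x ∈ K, ∀ i, |x i| ≤ |R| := by
    intro x hx i
    exact (euclid_abs_coord_le x i).trans (by simpa [Metric.mem_closedBall] using hKball hx)
  have hKIcc : K ⊆ Icc a b := by
    intro x hx
    constructor <;> intro i
    · have := (abs_le.mp (hcoord x hx i)).1
      show -B ≤ x i
      linarith [hBgt]
    · have := (abs_le.mp (hcoord x hx i)).2
      show x i ≤ B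
      linarith [hBgt]
  have hvol : MeasurePreserving eL volume volume :=
    EuclideanSpace.volume_preserving_symm_measurableEquiv_toLp (Fin (n+1))
  have key := MeasureTheory.integral_divergence_of_hasFDerivAt_off_countable_of_equiv eL
    (fun x y => Iff.rfl) hvol (fun i x => F x i)
    (fun i x => (EuclideanSpace.proj i).comp (fderiv ℝ F x)) ∅ Set.countable_empty a b
    (fun i => by show -B ≤ B; linarith [abs_nonneg R])
    (fun i => ((EuclideanSpace.proj i).continuous.comp hF.continuous).continuousOn)
    (fun x _ i => by
      exact (EuclideanSpace.proj i).hasFDerivAt.comp x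
        (hF.differentiable one_ne_zero x).hasFDerivAt)
    (ediv F) (fun x => rfl)
    (hdivcont.integrable_of_hasCompactSupport hcs).integrableOn
  have hfaces : ∀ (i : Fin (n+1)) (c : ℝ), |c| = B →
      ∀ x : Fin n → ℝ, F (eL.symm (i.insertNth c x)) i = 0 := by
    intro i c hc x
    have hni : eL.symm (i.insertNth c x) ∉ K := by
      intro hmem
      have h1 := hcoord _ hmem i
      have h2 : (eL.symm (i.insertNth c x)) i = c := by
        exact Fin.insertNth_apply_same (α := fun _ : Fin (n+1) => ℝ) i c x
      rw [h2, hc] at h1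
      linarith
    simp [hFz _ hni]
  have hzero : (∫ x in Icc a b, ediv F x) = 0 := by
    rw [key]
    apply Finset.sum_eq_zero
    intro i _
    have h1 : ∀ x : Fin n → ℝ, F (eL.symm (i.insertNth (eL b i) x)) i = 0 := by
      intro x
      apply hfaces i (eL b i) ?_ x
      show |B| = B
      rw [abs_of_nonneg]; positivity
    have h2 : ∀ x : Fin n → ℝ, F (eL.symm (i.insertNth (eL a i) x)) i = 0 := by
      intro x
      apply hfaces i (eL a i) ?_ x
      show |-B| = B
      rw [abs_neg, abs_of_nonneg]; positivity
    simp only [h1, h2, integral_zero, sub_zero]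
  rw [← setIntegral_eq_integral_of_forall_compl_eq_zero
    (fun x hx => hdivz x (fun hxK => hx (hKIcc hxK)))]
  exact hzero

lemma ediv_zero_off_support {d : ℕ}
    {F : EuclideanSpace ℝ (Fin d) → EuclideanSpace ℝ (Fin d)}
    {K : Set (EuclideanSpace ℝ (Fin d))} (hK : IsCompact K)
    (hsupp : Function.support F ⊆ K) : ∀ x, x ∉ K → ediv F x = 0 := by
  intro x hx
  apply ediv_eq_zero_of_eventually_zero
  have hmem : Kᶜ ∈ nhds x := hK.isClosed.isOpen_compl.mem_nhds hx
  filter_upwards [hmem] with y hy using Function.support_subset_iff'.mp hsupp y hy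

lemma ediv_integrable {d : ℕ}
    {F : EuclideanSpace ℝ (Fin d) → EuclideanSpace ℝ (Fin d)}
    (hF : ContDiff ℝ 1 F) {K : Set (EuclideanSpace ℝ (Fin d))} (hK : IsCompact K)
    (hsupp : Function.support F ⊆ K) : MeasureTheory.Integrable (ediv F) := by
  have hdivcont : Continuous (ediv F) := by
    have h1 : Continuous (fderiv ℝ F) := hF.continuous_fderiv one_ne_zero
    exact continuous_finset_sum _ fun i _ =>
      ((EuclideanSpace.proj i).continuous.comp
        ((ContinuousLinearMap.apply ℝ _ (EuclideanSpace.single i (1:ℝ))).continuous.comp h1))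
  exact hdivcont.integrable_of_hasCompactSupport
    (HasCompactSupport.intro hK (ediv_zero_off_support hK hsupp))

end AuxLemmas

/-- L¹ bound on the cell volume fraction (Step 2 of Proposition 1):
for a nonnegative compactly supported classical solution of
`∂ₜψ + ∇·[ψ φ(1-φ)(α∇φ - D∇ψ)] = R₀ψ(1-φ-ψ)` on `(0,T) × ℝᵈ`,
`∫ ψ(t) ≤ e^{R₀ t} ∫ ψ(0)` for all `t ∈ [0,T]`. -/
theorem stmt_2 (d : ℕ) (hd : d = 1 ∨ d = 2 ∨ d = 3) (T γ α D R₀ : ℝ)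
    (hT : 0 < T) (hγ : 0 < γ) (hα : 0 < α) (hD : 0 < D) (hR : 0 < R₀)
    (ψ φ : ℝ × EuclideanSpace ℝ (Fin d) → ℝ)
    (hψC2 : ContDiffOn ℝ 2 ψ (Set.Icc 0 T ×ˢ Set.univ))
    (hφC2 : ContDiffOn ℝ 2 φ (Set.Icc 0 T ×ˢ Set.univ))
    (hψnn : ∀ t ∈ Set.Icc (0 : ℝ) T, ∀ x, 0 ≤ ψ (t, x))
    (hφnn : ∀ t ∈ Set.Icc (0 : ℝ) T, ∀ x, 0 ≤ φ (t, x))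
    (K : Set (EuclideanSpace ℝ (Fin d))) (hK : IsCompact K)
    (hsupp : ∀ t ∈ Set.Icc (0 : ℝ) T, (Function.support fun x => ψ (t, x)) ⊆ K)
    (hpde : ∀ t ∈ Set.Ioo (0 : ℝ) T, ∀ x,
      deriv (fun s => ψ (s, x)) t +
        ediv (fun y => (ψ (t, y) * (φ (t, y) * (1 - φ (t, y)))) •
          (α • gradient (fun z => φ (t, z)) y - D • gradient (fun z => ψ (t, z)) y)) x
        = R₀ * ψ (t, x) * (1 - φ (t, x) - ψ (t, x))) :
    ∀ t ∈ Set.Icc (0 : ℝ) T, ∫ x, ψ (t, x) ≤ Real.exp (R₀ * t) * ∫ x, ψ (0, x) := by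
  obtain ⟨n, rfl⟩ : ∃ n, d = n + 1 := ⟨d - 1, by omega⟩
  clear hd
  -- slices are C²
  have hslice : ∀ t ∈ Set.Icc (0:ℝ) T, ContDiff ℝ 2 (fun x : EuclideanSpace ℝ (Fin (n+1)) => ψ (t, x)) := by
    intro t ht
    have h := hψC2.comp (f := fun x : EuclideanSpace ℝ (Fin (n+1)) => ((t, x) : ℝ × EuclideanSpace ℝ (Fin (n+1))))
      ((contDiff_const.prodMk contDiff_id).contDiffOn (s := Set.univ))
      (fun x _ => Set.mem_prod.mpr ⟨ht, Set.mem_univ _⟩)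
    exact contDiffOn_univ.mp h
  have hφslice : ∀ t ∈ Set.Icc (0:ℝ) T, ContDiff ℝ 2 (fun x : EuclideanSpace ℝ (Fin (n+1)) => φ (t, x)) := by
    intro t ht
    have h := hφC2.comp (f := fun x : EuclideanSpace ℝ (Fin (n+1)) => ((t, x) : ℝ × EuclideanSpace ℝ (Fin (n+1))))
      ((contDiff_const.prodMk contDiff_id).contDiffOn (s := Set.univ))
      (fun x _ => Set.mem_prod.mpr ⟨ht, Set.mem_univ _⟩)
    exact contDiffOn_univ.mp h
  have hψzero : ∀ t ∈ Set.Icc (0:ℝ) T, ∀ x ∉ K, ψ (t, x) = 0 := fun t ht x hx =>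
    Function.support_subset_iff'.mp (hsupp t ht) x hx
  have hcs : ∀ t ∈ Set.Icc (0:ℝ) T, HasCompactSupport (fun x : EuclideanSpace ℝ (Fin (n+1)) => ψ (t, x)) :=
    fun t ht => HasCompactSupport.intro hK (hψzero t ht)
  have hint : ∀ t ∈ Set.Icc (0:ℝ) T, Integrable (fun x : EuclideanSpace ℝ (Fin (n+1)) => ψ (t, x)) :=
    fun t ht => (hslice t ht).continuous.integrable_of_hasCompactSupport (hcs t ht)
  set M : ℝ → ℝ := fun t => ∫ x : EuclideanSpace ℝ (Fin (n+1)), ψ (t, x) with hM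
  have hψc : ContinuousOn ψ (Set.Icc 0 T ×ˢ Set.univ) := hψC2.continuousOn
  -- continuity of M
  obtain ⟨C0, hC0⟩ := ((isCompact_Icc (a := (0:ℝ)) (b := T)).prod hK).exists_bound_of_continuousOn
    (hψc.mono (Set.prod_mono subset_rfl (Set.subset_univ _)))
  have hbint : Integrable (K.indicator fun _ : EuclideanSpace ℝ (Fin (n+1)) => C0) := by
    rw [integrable_indicator_iff hK.measurableSet]
    exact integrableOn_const hK.measure_lt_top.ne
  have hMc : ContinuousOn M (Set.Icc 0 T) := by
    apply continuousOn_of_dominated (bound := K.indicator fun _ => C0)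
    · intro t ht; exact (hslice t ht).continuous.aestronglyMeasurable
    · intro t ht
      filter_upwards with x
      by_cases hx : x ∈ K
      · rw [Set.indicator_of_mem hx]; exact hC0 (t, x) ⟨ht, hx⟩
      · rw [Set.indicator_of_notMem hx, hψzero t ht x hx]; simp
    · exact hbint
    · filter_upwards with x
      exact hψc.comp (Continuous.continuousOn (continuous_id.prodMk continuous_const))
        (fun t ht => Set.mem_prod.mpr ⟨ht, Set.mem_univ _⟩)
  -- time derivative of ψ
  set dψ : ℝ → EuclideanSpace ℝ (Fin (n+1)) → ℝ :=
    fun t x => fderiv ℝ ψ (t, x) ((1:ℝ), (0 : EuclideanSpace ℝ (Fin (n+1)))) with hdψdef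
  have hopen : IsOpen (Set.Ioo (0:ℝ) T ×ˢ (Set.univ : Set (EuclideanSpace ℝ (Fin (n+1))))) :=
    isOpen_Ioo.prod isOpen_univ
  have hsub : (Set.Ioo (0:ℝ) T ×ˢ (Set.univ : Set (EuclideanSpace ℝ (Fin (n+1)))))
      ⊆ Set.Icc 0 T ×ˢ Set.univ := Set.prod_mono Set.Ioo_subset_Icc_self subset_rfl
  have hfdcont : ContinuousOn (fderiv ℝ ψ) (Set.Ioo 0 T ×ˢ Set.univ) :=
    (hψC2.mono hsub).continuousOn_fderiv_of_isOpen hopen (by norm_num)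
  have hdiffat : ∀ t ∈ Set.Ioo (0:ℝ) T, ∀ x, HasDerivAt (fun s => ψ (s, x)) (dψ t x) t := by
    intro t ht x
    have hmem : (Set.Icc 0 T ×ˢ Set.univ :
        Set (ℝ × EuclideanSpace ℝ (Fin (n+1)))) ∈ nhds (t, x) :=
      Filter.mem_of_superset (hopen.mem_nhds ⟨ht, Set.mem_univ x⟩) hsub
    have hdiff : DifferentiableAt ℝ ψ (t, x) :=
      (hψC2.differentiableOn (by norm_num)).differentiableAt hmem
    have hcurve : HasDerivAt (fun s : ℝ => ((s, x) : ℝ × EuclideanSpace ℝ (Fin (n+1))))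
        ((1:ℝ), (0 : EuclideanSpace ℝ (Fin (n+1)))) t :=
      (hasDerivAt_id t).prodMk (hasDerivAt_const t x)
    exact hdiff.hasFDerivAt.comp_hasDerivAt t hcurve
  have hdψ0 : ∀ t ∈ Set.Ioo (0:ℝ) T, ∀ x ∉ K, dψ t x = 0 := by
    intro t ht x hx
    have hnb : (Set.Ioo 0 T ×ˢ Kᶜ : Set (ℝ × EuclideanSpace ℝ (Fin (n+1)))) ∈ nhds (t, x) :=
      (isOpen_Ioo.prod hK.isClosed.isOpen_compl).mem_nhds ⟨ht, hx⟩
    have hz : fderiv ℝ ψ (t, x)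
        = fderiv ℝ (fun _ : ℝ × EuclideanSpace ℝ (Fin (n+1)) => (0:ℝ)) (t, x) := by
      apply Filter.EventuallyEq.fderiv_eq
      filter_upwards [hnb] with p hp
      simpa using hψzero p.1 (Set.Ioo_subset_Icc_self hp.1) p.2 hp.2
    simp [hdψdef, hz]
  have hM' : ∀ t₀ ∈ Set.Ioo (0:ℝ) T, HasDerivAt M (∫ x, dψ t₀ x) t₀ := by
    intro t₀ ht₀
    set ε : ℝ := min t₀ (T - t₀) / 2 with hεdef
    have hεpos : 0 < ε := by
      have h1 := ht₀.1; have h2 := ht₀.2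
      apply div_pos (lt_min (by linarith) (by linarith)) two_pos
    have hm1 : ε ≤ t₀ / 2 := by
      have := min_le_left t₀ (T - t₀); rw [hεdef]; linarith
    have hm2 : ε ≤ (T - t₀) / 2 := by
      have := min_le_right t₀ (T - t₀); rw [hεdef]; linarith
    have hIccsub : Set.Icc (t₀ - ε) (t₀ + ε) ⊆ Set.Ioo 0 T := by
      intro s hs
      have h1 := ht₀.1; have h2 := ht₀.2
      exact ⟨by have := hs.1; linarith, by have := hs.2; linarith⟩
    have hballIcc : Metric.ball t₀ ε ⊆ Set.Icc (t₀ - ε) (t₀ + ε) := by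
      rw [Real.ball_eq_Ioo]; exact Set.Ioo_subset_Icc_self
    have hballIoo : Metric.ball t₀ ε ⊆ Set.Ioo 0 T := hballIcc.trans hIccsub
    obtain ⟨C1, hC1⟩ := ((isCompact_Icc (a := t₀ - ε) (b := t₀ + ε)).prod hK).exists_bound_of_continuousOn
      (hfdcont.mono (Set.prod_mono hIccsub (Set.subset_univ _)))
    have hb1int : Integrable (K.indicator fun _ : EuclideanSpace ℝ (Fin (n+1)) => C1) := by
      rw [integrable_indicator_iff hK.measurableSet]
      exact integrableOn_const hK.measure_lt_top.ne
    have key := hasDerivAt_integral_of_dominated_loc_of_deriv_le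
      (F := fun t (x : EuclideanSpace ℝ (Fin (n+1))) => ψ (t, x)) (F' := dψ)
      (bound := K.indicator fun _ => C1) (x₀ := t₀) (Metric.ball_mem_nhds t₀ hεpos)
      ?_ (hint t₀ (Set.Ioo_subset_Icc_self ht₀)) ?_ ?_ hb1int ?_
    · exact key.2
    · filter_upwards [isOpen_Ioo.mem_nhds ht₀] with t ht
      exact (hslice t (Set.Ioo_subset_Icc_self ht)).continuous.aestronglyMeasurable
    · have hcd : Continuous (fun x => dψ t₀ x) := by
        have h2 : Continuous fun x : EuclideanSpace ℝ (Fin (n+1)) => fderiv ℝ ψ (t₀, x) :=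
          hfdcont.comp_continuous (continuous_const.prodMk continuous_id)
            (fun x => ⟨ht₀, Set.mem_univ x⟩)
        exact (ContinuousLinearMap.apply ℝ ℝ
          ((1:ℝ), (0 : EuclideanSpace ℝ (Fin (n+1))))).continuous.comp h2
      exact hcd.aestronglyMeasurable
    · filter_upwards with x
      intro t ht
      by_cases hx : x ∈ K
      · rw [Set.indicator_of_mem hx]
        have h1 : ‖fderiv ℝ ψ (t, x)‖ ≤ C1 := hC1 (t, x) ⟨hballIcc ht, hx⟩
        have h2 : ‖dψ t x‖ ≤ ‖fderiv ℝ ψ (t, x)‖ *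
            ‖((1:ℝ), (0 : EuclideanSpace ℝ (Fin (n+1))))‖ :=
          (fderiv ℝ ψ (t, x)).le_opNorm _
        have h3 : ‖((1:ℝ), (0 : EuclideanSpace ℝ (Fin (n+1))))‖ = 1 := by
          simp [Prod.norm_def]
        rw [h3, mul_one] at h2
        exact h2.trans h1
      · rw [Set.indicator_of_notMem hx, hdψ0 t (hballIoo ht) x hx]; simp
    · filter_upwards with x t ht
      exact hdiffat t (hballIoo ht) x
  have hGC1 : ∀ t ∈ Set.Icc (0:ℝ) T, ContDiff ℝ 1 (fun y => (ψ (t, y) * (φ (t, y) * (1 - φ (t, y)))) • (α • gradient (fun z => φ (t, z)) y - D • gradient (fun z => ψ (t, z)) y)) := by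
    intro t ht
    have hψt := hslice t ht
    have hφt := hφslice t ht
    have hgrad : ∀ (f : EuclideanSpace ℝ (Fin (n+1)) → ℝ), ContDiff ℝ 2 f →
        ContDiff ℝ 1 (gradient f) := by
      intro f hf
      have h1 : ContDiff ℝ 1 (fderiv ℝ f) := hf.fderiv_right (by norm_num)
      have h2 : ContDiff ℝ 1 (fun g : StrongDual ℝ (EuclideanSpace ℝ (Fin (n+1))) =>
          (InnerProductSpace.toDual ℝ (EuclideanSpace ℝ (Fin (n+1)))).symm g) :=
        LinearIsometryEquiv.contDiff _
      exact h2.comp h1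
    exact ((hψt.of_le (by norm_num)).mul ((hφt.of_le (by norm_num)).mul
        (contDiff_const.sub (hφt.of_le (by norm_num))))).smul
      (((hgrad _ hφt).const_smul α).sub ((hgrad _ hψt).const_smul D))
  have hGsupp : ∀ t ∈ Set.Icc (0:ℝ) T, Function.support (fun y => (ψ (t, y) * (φ (t, y) * (1 - φ (t, y)))) • (α • gradient (fun z => φ (t, z)) y - D • gradient (fun z => ψ (t, z)) y)) ⊆ K := by
    intro t ht y hy
    by_contra hyK
    apply hy
    show (ψ (t, y) * (φ (t, y) * (1 - φ (t, y)))) • _ = 0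
    rw [hψzero t ht y hyK]
    simp
  have hM'le : ∀ t ∈ Set.Ioo (0:ℝ) T, (∫ x, dψ t x) ≤ R₀ * M t := by
    intro t ht
    have htI := Set.Ioo_subset_Icc_self ht
    have hG1 := hGC1 t htI
    have hGs := hGsupp t htI
    have hdint : Integrable (ediv (fun y => (ψ (t, y) * (φ (t, y) * (1 - φ (t, y)))) • (α • gradient (fun z => φ (t, z)) y - D • gradient (fun z => ψ (t, z)) y))) := ediv_integrable hG1 hK hGs
    have hdzero : (∫ x, ediv (fun y => (ψ (t, y) * (φ (t, y) * (1 - φ (t, y)))) • (α • gradient (fun z => φ (t, z)) y - D • gradient (fun z => ψ (t, z)) y)) x) = 0 := integral_ediv_eq_zero hG1 hK hGs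
    have hRint : Integrable (fun x => R₀ * ψ (t, x) * (1 - φ (t, x) - ψ (t, x))) := by
      apply Continuous.integrable_of_hasCompactSupport
      · exact (continuous_const.mul (hslice t htI).continuous).mul
          ((continuous_const.sub (hφslice t htI).continuous).sub (hslice t htI).continuous)
      · apply HasCompactSupport.intro hK
        intro x hx; rw [hψzero t htI x hx]; ring
    have heq : (fun x => dψ t x)
        = fun x => R₀ * ψ (t, x) * (1 - φ (t, x) - ψ (t, x)) - ediv (fun y => (ψ (t, y) * (φ (t, y) * (1 - φ (t, y)))) • (α • gradient (fun z => φ (t, z)) y - D • gradient (fun z => ψ (t, z)) y)) x := by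
      funext x
      have h := hpde t ht x
      have hder : deriv (fun s => ψ (s, x)) t = dψ t x := (hdiffat t ht x).deriv
      rw [hder] at h
      linarith
    rw [heq, integral_sub hRint hdint, hdzero, sub_zero]
    have hmono : (∫ x, R₀ * ψ (t, x) * (1 - φ (t, x) - ψ (t, x)))
        ≤ ∫ x, R₀ * ψ (t, x) := by
      apply integral_mono hRint ((hint t htI).const_mul R₀)
      intro x
      show R₀ * ψ (t, x) * (1 - φ (t, x) - ψ (t, x)) ≤ R₀ * ψ (t, x)
      have h1 := hψnn t htI x
      have h2 := hφnn t htI x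
      have h3 := hR.le
      nlinarith [mul_nonneg (mul_nonneg h3 h1) h2, mul_nonneg (mul_nonneg h3 h1) h1]
    exact hmono.trans_eq (integral_const_mul R₀ _)
  have hg : ∀ t ∈ Set.Ioo (0:ℝ) T, HasDerivAt (fun s => Real.exp (-R₀ * s) * M s)
      (Real.exp (-R₀ * t) * -R₀ * M t + Real.exp (-R₀ * t) * (∫ x, dψ t x)) t := by
    intro t ht
    have h1 : HasDerivAt (fun s : ℝ => -R₀ * s) (-R₀) t := by
      simpa using (hasDerivAt_id t).const_mul (-R₀)
    exact h1.exp.mul (hM' t ht)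
  have hanti : AntitoneOn (fun s => Real.exp (-R₀ * s) * M s) (Set.Icc 0 T) := by
    apply antitoneOn_of_deriv_nonpos (convex_Icc 0 T)
    · exact ((Real.continuous_exp.comp (continuous_const.mul continuous_id)).continuousOn).mul hMc
    · rw [interior_Icc]
      intro t ht
      exact (hg t ht).differentiableAt.differentiableWithinAt
    · rw [interior_Icc]
      intro t ht
      rw [(hg t ht).deriv]
      have h1 := hM'le t ht
      have h2 := (Real.exp_pos (-R₀ * t)).le
      nlinarith [mul_le_mul_of_nonneg_left h1 h2]
  intro t ht
  have h0 : (0:ℝ) ∈ Set.Icc (0:ℝ) T := ⟨le_refl 0, hT.le⟩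
  have h1 := hanti h0 ht ht.1
  simp only [mul_zero, Real.exp_zero, one_mul] at h1
  have h2 := mul_le_mul_of_nonneg_left h1 (Real.exp_pos (R₀ * t)).le
  rw [← mul_assoc, ← Real.exp_add] at h2
  have h3 : R₀ * t + -R₀ * t = 0 := by ring
  rw [h3, Real.exp_zero, one_mul] at h2
  exact h2
end

section
/- Let d ∈ {1,2,3}, T > 0 and let γ, α, D, R₀ > 0. Let ψ, φ : [0,T] × ℝᵈ → ℝ be C² functions with ψ ≥ 0 and φ ≥ 0, such that there is a compact set K ⊂ ℝᵈ with supp ψ(t,·) ⊆ K for all t ∈ [0,T], and such that ∂_t ψ + ∇_x·[ψ φ(1-φ)(α∇_x φ - D∇_x ψ)] = R₀ ψ (1 - φ - ψ) holds on (0,T) × ℝᵈ. Then R₀ ∫₀ᵀ ∫_{ℝᵈ} ψ(t,x)² dx dt ≤ e^{R₀ T} ∫_{ℝᵈ} ψ(0,x) dx. -/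
open MeasureTheory Set

theorem pi_div_zero {n : ℕ} (G : (Fin (n+1) → ℝ) → (Fin (n+1) → ℝ))
    (hG : ContDiff ℝ 1 G) (hcs : HasCompactSupport G) :
    ∫ x, ∑ i, fderiv ℝ G x (Pi.single i 1) i = 0 := by
  obtain ⟨R₁, hR₁⟩ := hcs.isBounded.subset_closedBall 0
  set R : ℝ := max R₁ 0 with hRdef
  set a : Fin (n+1) → ℝ := fun _ => -(R+1) with ha
  set b : Fin (n+1) → ℝ := fun _ => (R+1) with hb
  have hRnn : (0:ℝ) ≤ R := le_max_right _ _
  have hle : a ≤ b := fun i => by simp only [ha, hb]; linarith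
  have hsub : tsupport G ⊆ Set.pi univ (fun i => Ioo (a i) (b i)) := by
    intro x hx
    have h1 : ‖x‖ ≤ R₁ := by simpa using hR₁ hx
    intro i _
    have h2 : |x i| ≤ ‖x‖ := by simpa using norm_le_pi_norm x i
    have h3 : |x i| ≤ R := le_trans (h2.trans h1) (le_max_left _ _)
    simp only [ha, hb, mem_Ioo]
    constructor <;> [linarith [neg_abs_le (x i)]; linarith [le_abs_self (x i)]]
  have hIcc : Set.pi univ (fun i => Ioo (a i) (b i)) ⊆ Icc a b := by
    intro x hx
    constructor <;> intro i <;> have := hx i (mem_univ i)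
    · exact le_of_lt this.1
    · exact le_of_lt this.2
  set f : (Fin (n+1) → ℝ) → ℝ := fun x => ∑ i, fderiv ℝ G x (Pi.single i 1) i with hf
  have hfsupp : ∀ x, x ∉ Icc a b → f x = 0 := by
    intro x hx
    have hx' : x ∉ tsupport G := fun h => hx (hIcc (hsub h))
    have : fderiv ℝ G x = 0 := by
      by_contra h
      exact hx' (support_fderiv_subset ℝ (Function.mem_support.2 h))
    simp [hf, this]
  have hfc : Continuous f := by
    have := (hG.continuous_fderiv one_ne_zero)
    fun_prop
  have h1 : ∫ x, f x = ∫ x in Icc a b, f x :=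
    (setIntegral_eq_integral_of_forall_compl_eq_zero hfsupp).symm
  rw [h1]
  have key := integral_divergence_of_hasFDerivAt_off_countable a b hle G (fderiv ℝ G)
    ∅ countable_empty (hG.continuous.continuousOn)
    (fun x _ => (hG.differentiable one_ne_zero x).hasFDerivAt)
    ((hfc.continuousOn).integrableOn_compact isCompact_Icc)
  rw [show (∫ x in Icc a b, f x) = ∫ x in Icc a b, ∑ i, fderiv ℝ G x (Pi.single i 1) i from rfl,
    key]
  apply Finset.sum_eq_zero
  intro i _
  have hfront : ∀ y, G (i.insertNth (b i) y) i = 0 := by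
    intro y
    have : i.insertNth (b i) y ∉ tsupport G := by
      intro h
      have := (hsub h) i (mem_univ i)
      simp [Fin.insertNth_apply_same, hb] at this
    simp [image_eq_zero_of_notMem_tsupport this]
  have hback : ∀ y, G (i.insertNth (a i) y) i = 0 := by
    intro y
    have : i.insertNth (a i) y ∉ tsupport G := by
      intro h
      have := (hsub h) i (mem_univ i)
      simp [Fin.insertNth_apply_same, ha, hb] at this
    simp [image_eq_zero_of_notMem_tsupport this]
  simp only [hfront, hback, integral_zero, sub_zero]


theorem ediv_zero {n : ℕ} (G : EuclideanSpace ℝ (Fin (n+1)) → EuclideanSpace ℝ (Fin (n+1)))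
    (hG : ContDiff ℝ 1 G) (hcs : HasCompactSupport G) :
    ∫ x, ediv G x = 0 := by
  set eqL := EuclideanSpace.equiv (Fin (n+1)) ℝ with heqL
  set G' : (Fin (n+1) → ℝ) → (Fin (n+1) → ℝ) := fun y => eqL (G (eqL.symm y)) with hG'def
  have hG' : ContDiff ℝ 1 G' := (eqL.contDiff.comp (hG.comp eqL.symm.contDiff))
  have hcs' : HasCompactSupport G' := by
    have h1 : HasCompactSupport (fun x => eqL (G x)) := hcs.comp_left (map_zero eqL)
    exact h1.comp_homeomorph eqL.symm.toHomeomorph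
  have hfd : ∀ y, fderiv ℝ G' y =
      ((eqL : EuclideanSpace ℝ (Fin (n+1)) →L[ℝ] (Fin (n+1) → ℝ)).comp
        ((fderiv ℝ G (eqL.symm y)).comp
          (eqL.symm : (Fin (n+1) → ℝ) →L[ℝ] EuclideanSpace ℝ (Fin (n+1))))) := by
    intro y
    have h1 : HasFDerivAt (⇑eqL.symm)
        (eqL.symm : (Fin (n+1) → ℝ) →L[ℝ] EuclideanSpace ℝ (Fin (n+1))) y :=
      eqL.symm.hasFDerivAt
    have h2 : HasFDerivAt G (fderiv ℝ G (eqL.symm y)) (eqL.symm y) :=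
      (hG.differentiable one_ne_zero _).hasFDerivAt
    have h3 := (eqL.hasFDerivAt.comp _ (h2.comp y h1) : HasFDerivAt G' _ y)
    exact h3.fderiv
  have hdiveq : ∀ y, (∑ i, fderiv ℝ G' y (Pi.single i 1) i) = ediv G (eqL.symm y) := by
    intro y
    rw [hfd]
    apply Finset.sum_congr rfl
    intro i _
    have : (eqL.symm : (Fin (n+1) → ℝ) →L[ℝ] EuclideanSpace ℝ (Fin (n+1)))
        (Pi.single i (1:ℝ)) = EuclideanSpace.single i (1:ℝ) := rfl
    simp only [ContinuousLinearMap.comp_apply, this]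
    rfl
  have hmp := (EuclideanSpace.volume_preserving_symm_measurableEquiv_toLp (Fin (n+1))).symm
  have h4 : ∫ x, ediv G x = ∫ y, ediv G (MeasurableEquiv.toLp 2 (Fin (n+1) → ℝ) y) :=
    (hmp.integral_comp' (ediv G)).symm
  rw [h4]
  have h5 : ∀ y, ediv G (MeasurableEquiv.toLp 2 (Fin (n+1) → ℝ) y)
      = ∑ i, fderiv ℝ G' y (Pi.single i 1) i := by
    intro y
    rw [hdiveq y]
    rfl
  simp only [h5]
  exact pi_div_zero G' hG' hcs'

set_option maxHeartbeats 1000000 in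
/-- Space-time L² estimate (Step 2 of Proposition 1):
for a nonnegative compactly supported classical solution of
`∂ₜψ + ∇·[ψ φ(1-φ)(α∇φ - D∇ψ)] = R₀ψ(1-φ-ψ)` on `(0,T) × ℝᵈ`,
`R₀ ∫₀ᵀ ∫ ψ² ≤ e^{R₀ T} ∫ ψ(0)`. -/
theorem stmt_3 (d : ℕ) (hd : d = 1 ∨ d = 2 ∨ d = 3) (T γ α D R₀ : ℝ)
    (hT : 0 < T) (hγ : 0 < γ) (hα : 0 < α) (hD : 0 < D) (hR : 0 < R₀)
    (ψ φ : ℝ × EuclideanSpace ℝ (Fin d) → ℝ)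
    (hψC2 : ContDiffOn ℝ 2 ψ (Set.Icc 0 T ×ˢ Set.univ))
    (hφC2 : ContDiffOn ℝ 2 φ (Set.Icc 0 T ×ˢ Set.univ))
    (hψnn : ∀ t ∈ Set.Icc (0 : ℝ) T, ∀ x, 0 ≤ ψ (t, x))
    (hφnn : ∀ t ∈ Set.Icc (0 : ℝ) T, ∀ x, 0 ≤ φ (t, x))
    (K : Set (EuclideanSpace ℝ (Fin d))) (hK : IsCompact K)
    (hsupp : ∀ t ∈ Set.Icc (0 : ℝ) T, (Function.support fun x => ψ (t, x)) ⊆ K)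
    (hpde : ∀ t ∈ Set.Ioo (0 : ℝ) T, ∀ x,
      deriv (fun s => ψ (s, x)) t +
        ediv (fun y => (ψ (t, y) * (φ (t, y) * (1 - φ (t, y)))) •
          (α • gradient (fun z => φ (t, z)) y - D • gradient (fun z => ψ (t, z)) y)) x
        = R₀ * ψ (t, x) * (1 - φ (t, x) - ψ (t, x))) :
    R₀ * ∫ t in (0 : ℝ)..T, ∫ x, ψ (t, x) ^ 2 ≤ Real.exp (R₀ * T) * ∫ x, ψ (0, x) := by

  obtain ⟨n, rfl⟩ : ∃ n, d = n + 1 := by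
    rcases hd with rfl | rfl | rfl
    exacts [⟨0, rfl⟩, ⟨1, rfl⟩, ⟨2, rfl⟩]
  clear hd
  -- vanishing off K
  have hψ0 : ∀ t ∈ Icc (0:ℝ) T, ∀ x ∉ K, ψ (t, x) = 0 := by
    intro t ht x hx
    by_contra h
    have hm : x ∈ Function.support fun y => ψ (t, y) := h
    exact hx (hsupp t ht hm)
  -- continuity of slices in x
  have hslice : ∀ t ∈ Icc (0:ℝ) T, Continuous fun x : EuclideanSpace ℝ (Fin (n+1)) => ψ (t, x) := by
    intro t ht
    rw [← continuousOn_univ]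
    exact (hψC2.continuousOn).comp
      ((continuous_const.prodMk continuous_id).continuousOn :
        ContinuousOn (fun x : EuclideanSpace ℝ (Fin (n+1)) => ((t, x) : ℝ × EuclideanSpace ℝ (Fin (n+1)))) univ)
      (fun x _ => ⟨ht, mem_univ x⟩)
  have hsliceφ : ∀ t ∈ Icc (0:ℝ) T, Continuous fun x : EuclideanSpace ℝ (Fin (n+1)) => φ (t, x) := by
    intro t ht
    rw [← continuousOn_univ]
    exact (hφC2.continuousOn).comp
      ((continuous_const.prodMk continuous_id).continuousOn :
        ContinuousOn (fun x : EuclideanSpace ℝ (Fin (n+1)) => ((t, x) : ℝ × EuclideanSpace ℝ (Fin (n+1)))) univ)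
      (fun x _ => ⟨ht, mem_univ x⟩)
  -- compact support of slices
  have hcsψ : ∀ t ∈ Icc (0:ℝ) T, HasCompactSupport fun x : EuclideanSpace ℝ (Fin (n+1)) => ψ (t, x) := by
    intro t ht
    exact HasCompactSupport.intro hK (fun x hx => hψ0 t ht x hx)
  -- integrability
  have hintψ : ∀ t ∈ Icc (0:ℝ) T, Integrable fun x : EuclideanSpace ℝ (Fin (n+1)) => ψ (t, x) := by
    intro t ht
    exact (hslice t ht).integrable_of_hasCompactSupport (hcsψ t ht)
  have hintψ2 : ∀ t ∈ Icc (0:ℝ) T, Integrable fun x : EuclideanSpace ℝ (Fin (n+1)) => ψ (t, x) ^ 2 := by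
    intro t ht
    have : (fun x : EuclideanSpace ℝ (Fin (n+1)) => ψ (t, x) ^ 2) = (fun x : EuclideanSpace ℝ (Fin (n+1)) => ψ (t, x) * ψ (t, x)) := by
      ext x; ring
    rw [this]
    exact ((hslice t ht).mul (hslice t ht)).integrable_of_hasCompactSupport
      ((hcsψ t ht).mul_right)
  have hintψφ : ∀ t ∈ Icc (0:ℝ) T, Integrable fun x : EuclideanSpace ℝ (Fin (n+1)) => ψ (t, x) * φ (t, x) := by
    intro t ht
    exact ((hslice t ht).mul (hsliceφ t ht)).integrable_of_hasCompactSupport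
      ((hcsψ t ht).mul_right)
  -- C² slices at interior times
  have hnhds : ∀ t ∈ Ioo (0:ℝ) T, ∀ x : EuclideanSpace ℝ (Fin (n+1)),
      (Icc (0:ℝ) T ×ˢ (univ : Set (EuclideanSpace ℝ (Fin (n+1))))) ∈ nhds (t, x) := by
    intro t ht x
    apply mem_nhds_iff.2
    exact ⟨Ioo (0:ℝ) T ×ˢ univ, prod_mono Ioo_subset_Icc_self (subset_refl _),
      isOpen_Ioo.prod isOpen_univ, ⟨ht, mem_univ x⟩⟩
  have hψtC2 : ∀ t ∈ Ioo (0:ℝ) T, ContDiff ℝ 2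
      fun x : EuclideanSpace ℝ (Fin (n+1)) => ψ (t, x) := by
    intro t ht
    rw [contDiff_iff_contDiffAt]
    intro x
    exact (hψC2.contDiffAt (hnhds t ht x)).comp x
      ((contDiff_const.prodMk contDiff_id).contDiffAt)
  have hφtC2 : ∀ t ∈ Ioo (0:ℝ) T, ContDiff ℝ 2
      fun x : EuclideanSpace ℝ (Fin (n+1)) => φ (t, x) := by
    intro t ht
    rw [contDiff_iff_contDiffAt]
    intro x
    exact (hφC2.contDiffAt (hnhds t ht x)).comp x
      ((contDiff_const.prodMk contDiff_id).contDiffAt)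
  -- the velocity field
  set V : ℝ → EuclideanSpace ℝ (Fin (n+1)) → EuclideanSpace ℝ (Fin (n+1)) :=
    fun t y => (ψ (t, y) * (φ (t, y) * (1 - φ (t, y)))) •
      (α • gradient (fun z => φ (t, z)) y - D • gradient (fun z => ψ (t, z)) y) with hVdef
  have hVC1 : ∀ t ∈ Ioo (0:ℝ) T, ContDiff ℝ 1 (V t) := by
    intro t ht
    have hgφ : ContDiff ℝ 1 (gradient fun z => φ (t, z)) := by
      have h1 : ContDiff ℝ 1 (fderiv ℝ fun z => φ (t, z)) :=
        (hφtC2 t ht).fderiv_right (by norm_num)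
      exact ((InnerProductSpace.toDual ℝ _).symm.contDiff).comp h1
    have hgψ : ContDiff ℝ 1 (gradient fun z => ψ (t, z)) := by
      have h1 : ContDiff ℝ 1 (fderiv ℝ fun z => ψ (t, z)) :=
        (hψtC2 t ht).fderiv_right (by norm_num)
      exact ((InnerProductSpace.toDual ℝ _).symm.contDiff).comp h1
    have hψ1 : ContDiff ℝ 1 fun x : EuclideanSpace ℝ (Fin (n+1)) => ψ (t, x) :=
      (hψtC2 t ht).of_le (by norm_num)
    have hφ1 : ContDiff ℝ 1 fun x : EuclideanSpace ℝ (Fin (n+1)) => φ (t, x) :=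
      (hφtC2 t ht).of_le (by norm_num)
    exact (hψ1.mul (hφ1.mul (contDiff_const.sub hφ1))).smul
      ((hgφ.const_smul α).sub (hgψ.const_smul D))
  have hVsupp : ∀ t ∈ Icc (0:ℝ) T, ∀ y ∉ K, V t y = 0 := by
    intro t ht y hy
    simp [hVdef, hψ0 t ht y hy]
  have hVcs : ∀ t ∈ Icc (0:ℝ) T, HasCompactSupport (V t) := by
    intro t ht
    exact HasCompactSupport.intro hK (hVsupp t ht)
  have hdiv0 : ∀ t ∈ Ioo (0:ℝ) T, ∫ x, ediv (V t) x = 0 := by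
    intro t ht
    exact ediv_zero (V t) (hVC1 t ht) (hVcs t (Ioo_subset_Icc_self ht))
  have hedivcont : ∀ t ∈ Ioo (0:ℝ) T, Continuous (ediv (V t)) := by
    intro t ht
    have h1 : Continuous (fderiv ℝ (V t)) := (hVC1 t ht).continuous_fderiv one_ne_zero
    apply continuous_finset_sum
    intro i _
    exact (EuclideanSpace.proj i).continuous.comp
      (((ContinuousLinearMap.apply ℝ _ (EuclideanSpace.single i (1:ℝ))).continuous).comp h1)
  have hedivsupp : ∀ t ∈ Ioo (0:ℝ) T, ∀ y ∉ K, ediv (V t) y = 0 := by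
    intro t ht y hy
    have h1 : fderiv ℝ (V t) y = 0 := by
      by_contra h
      have h2 := support_fderiv_subset ℝ (Function.mem_support.2 h)
      have h3 : tsupport (V t) ⊆ K :=
        closure_minimal (Function.support_subset_iff'.2 (hVsupp t (Ioo_subset_Icc_self ht)))
          hK.isClosed
      exact hy (h3 h2)
    simp [ediv, h1]
  have hedivint : ∀ t ∈ Ioo (0:ℝ) T, Integrable (ediv (V t)) := by
    intro t ht
    exact (hedivcont t ht).integrable_of_hasCompactSupport
      (HasCompactSupport.intro hK (hedivsupp t ht))
  -- the three spatial integrals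
  set F : ℝ → ℝ := fun t => ∫ x, ψ (t, x) with hFdef
  set Gf : ℝ → ℝ := fun t => ∫ x, ψ (t, x) ^ 2 with hGdef
  set P : ℝ → ℝ := fun t => ∫ x, ψ (t, x) * φ (t, x) with hPdef
  have huncψ : ContinuousOn (Function.uncurry fun (t : ℝ)
      (x : EuclideanSpace ℝ (Fin (n+1))) => ψ (t, x)) (Icc (0:ℝ) T ×ˢ univ) := by
    exact hψC2.continuousOn
  have huncφ : ContinuousOn (Function.uncurry fun (t : ℝ)
      (x : EuclideanSpace ℝ (Fin (n+1))) => φ (t, x)) (Icc (0:ℝ) T ×ˢ univ) := by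
    exact hφC2.continuousOn
  have hFcont : ContinuousOn F (Icc (0:ℝ) T) :=
    continuousOn_integral_of_compact_support hK huncψ
      (fun t x ht hx => hψ0 t ht x hx)
  have hGcont : ContinuousOn Gf (Icc (0:ℝ) T) := by
    apply continuousOn_integral_of_compact_support hK
    · have : (Function.uncurry fun (t : ℝ)
          (x : EuclideanSpace ℝ (Fin (n+1))) => ψ (t, x) ^ 2)
          = fun p => (Function.uncurry fun (t : ℝ)
          (x : EuclideanSpace ℝ (Fin (n+1))) => ψ (t, x)) p ^ 2 := by
        ext p; simp [Function.uncurry]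
      rw [this]
      exact huncψ.pow 2
    · intro t x ht hx
      simp [hψ0 t ht x hx]
  have hPcont : ContinuousOn P (Icc (0:ℝ) T) := by
    apply continuousOn_integral_of_compact_support hK
    · have : (Function.uncurry fun (t : ℝ)
          (x : EuclideanSpace ℝ (Fin (n+1))) => ψ (t, x) * φ (t, x))
          = fun p => (Function.uncurry fun (t : ℝ)
          (x : EuclideanSpace ℝ (Fin (n+1))) => ψ (t, x)) p *
            (Function.uncurry fun (t : ℝ)
          (x : EuclideanSpace ℝ (Fin (n+1))) => φ (t, x)) p := by
        ext p; simp [Function.uncurry]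
      rw [this]
      exact huncψ.mul huncφ
    · intro t x ht hx
      simp [hψ0 t ht x hx]
  have hFnn : ∀ t ∈ Icc (0:ℝ) T, 0 ≤ F t := fun t ht =>
    integral_nonneg (fun x => hψnn t ht x)
  have hGnn : ∀ t ∈ Icc (0:ℝ) T, 0 ≤ Gf t := fun t ht =>
    integral_nonneg (fun x => sq_nonneg _)
  have hPnn : ∀ t ∈ Icc (0:ℝ) T, 0 ≤ P t := fun t ht =>
    integral_nonneg (fun x => mul_nonneg (hψnn t ht x) (hφnn t ht x))
  -- time derivative of slices
  set q : ℝ → EuclideanSpace ℝ (Fin (n+1)) → ℝ :=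
    fun s x => fderiv ℝ ψ (s, x) ((1:ℝ), (0 : EuclideanSpace ℝ (Fin (n+1)))) with hqdef
  have hq : ∀ s ∈ Ioo (0:ℝ) T, ∀ x, HasDerivAt (fun u => ψ (u, x)) (q s x) s := by
    intro s hs x
    have hFd : HasFDerivAt ψ (fderiv ℝ ψ (s, x)) (s, x) :=
      (((hψC2.contDiffAt (hnhds s hs x)).differentiableAt (by norm_num)).hasFDerivAt)
    have hcurve : HasDerivAt (fun u : ℝ => ((u, x) : ℝ × EuclideanSpace ℝ (Fin (n+1))))
        ((1:ℝ), (0 : EuclideanSpace ℝ (Fin (n+1)))) s :=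
      (hasDerivAt_id s).prodMk (hasDerivAt_const s x)
    exact hFd.comp_hasDerivAt s hcurve
  have hq0 : ∀ s ∈ Ioo (0:ℝ) T, ∀ x ∉ K, q s x = 0 := by
    intro s hs x hx
    have hzero : (fun u : ℝ => ψ (u, x)) =ᶠ[nhds s] fun _ => (0:ℝ) := by
      filter_upwards [Ioo_mem_nhds hs.1 hs.2] with u hu
      exact hψ0 u (Ioo_subset_Icc_self hu) x hx
    have h1 : HasDerivAt (fun _ : ℝ => (0:ℝ)) (q s x) s :=
      (hq s hs x).congr_of_eventuallyEq hzero.symm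
    have h2 : HasDerivAt (fun _ : ℝ => (0:ℝ)) 0 s := hasDerivAt_const s 0
    exact (h1.unique h2)
  have hqcont : ContinuousOn (fun p : ℝ × EuclideanSpace ℝ (Fin (n+1)) =>
      fderiv ℝ ψ p ((1:ℝ), (0 : EuclideanSpace ℝ (Fin (n+1)))))
      (Ioo (0:ℝ) T ×ˢ univ) := by
    have h1 : ContDiffOn ℝ 2 ψ (Ioo (0:ℝ) T ×ˢ univ) :=
      hψC2.mono (prod_mono Ioo_subset_Icc_self (subset_refl _))
    have h2 : ContinuousOn (fderiv ℝ ψ) (Ioo (0:ℝ) T ×ˢ univ) :=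
      h1.continuousOn_fderiv_of_isOpen (isOpen_Ioo.prod isOpen_univ) (by norm_num)
    exact ((ContinuousLinearMap.apply ℝ ℝ
      (((1:ℝ), (0 : EuclideanSpace ℝ (Fin (n+1)))) : ℝ × EuclideanSpace ℝ (Fin (n+1)))
      ).continuous).comp_continuousOn h2
  -- differentiating under the integral sign
  have hFderiv : ∀ t ∈ Ioo (0:ℝ) T, HasDerivAt F (R₀ * (F t - P t - Gf t)) t := by
    intro t₀ ht₀
    set ε : ℝ := min t₀ (T - t₀) / 2 with hεdef
    have hε : 0 < ε := by
      have := ht₀.1; have := ht₀.2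
      apply div_pos _ (by norm_num)
      exact lt_min (by linarith) (by linarith)
    have hball : Metric.ball t₀ ε ⊆ Ioo (0:ℝ) T := by
      intro s hs
      rw [Metric.mem_ball, Real.dist_eq, abs_lt] at hs
      have h1 : ε ≤ t₀ / 2 := by
        rw [hεdef]; gcongr; exact min_le_left _ _
      have h2 : ε ≤ (T - t₀) / 2 := by
        rw [hεdef]; gcongr; exact min_le_right _ _
      constructor <;> [linarith [ht₀.1]; linarith [ht₀.2]]
    have hcball : Metric.closedBall t₀ ε ×ˢ K ⊆ Ioo (0:ℝ) T ×ˢ univ := by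
      intro p hp
      refine ⟨?_, mem_univ _⟩
      rcases hp with ⟨hp1, hp2⟩
      rw [Metric.mem_closedBall, Real.dist_eq, abs_le] at hp1
      have h1 : ε ≤ t₀ / 2 := by
        rw [hεdef]; gcongr; exact min_le_left _ _
      have h2 : ε ≤ (T - t₀) / 2 := by
        rw [hεdef]; gcongr; exact min_le_right _ _
      constructor <;> [linarith [ht₀.1]; linarith [ht₀.2]]
    obtain ⟨M, hM⟩ : ∃ M, ∀ p ∈ Metric.closedBall t₀ ε ×ˢ K,
        ‖fderiv ℝ ψ p ((1:ℝ), (0 : EuclideanSpace ℝ (Fin (n+1))))‖ ≤ M := by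
      apply ((isCompact_closedBall t₀ ε).prod hK).exists_bound_of_continuousOn
      exact hqcont.mono hcball
    have key := hasDerivAt_integral_of_dominated_loc_of_deriv_le (μ := volume)
      (x₀ := t₀) (s := Metric.ball t₀ ε) (F := fun s x => ψ (s, x)) (F' := q)
      (bound := K.indicator fun _ => M) (Metric.ball_mem_nhds t₀ hε) ?_ ?_ ?_ ?_ ?_ ?_
    · -- now compute the value of the derivative
      have hpt : ∀ x, q t₀ x =
          R₀ * ψ (t₀, x) * (1 - φ (t₀, x) - ψ (t₀, x)) - ediv (V t₀) x := by
        intro x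
        have h1 := hpde t₀ ht₀ x
        have h2 : deriv (fun s => ψ (s, x)) t₀ = q t₀ x := (hq t₀ ht₀ x).deriv
        rw [h2] at h1
        linarith
      have hint1 : Integrable fun x => R₀ * ψ (t₀, x) * (1 - φ (t₀, x) - ψ (t₀, x)) := by
        have : (fun x => R₀ * ψ (t₀, x) * (1 - φ (t₀, x) - ψ (t₀, x)))
            = fun x => R₀ * ψ (t₀, x) - R₀ * (ψ (t₀, x) * φ (t₀, x)) -
                R₀ * ψ (t₀, x) ^ 2 := by
          ext x; ring
        rw [this]
        exact (((hintψ t₀ (Ioo_subset_Icc_self ht₀)).const_mul R₀).sub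
          ((hintψφ t₀ (Ioo_subset_Icc_self ht₀)).const_mul R₀)).sub
          ((hintψ2 t₀ (Ioo_subset_Icc_self ht₀)).const_mul R₀)
      have hval : (∫ x, q t₀ x) = R₀ * (F t₀ - P t₀ - Gf t₀) := by
        have h3 : (∫ x, q t₀ x) =
            ∫ x, (R₀ * ψ (t₀, x) * (1 - φ (t₀, x) - ψ (t₀, x)) - ediv (V t₀) x) := by
          congr 1; ext x; exact hpt x
        rw [h3, integral_sub hint1 (hedivint t₀ ht₀), hdiv0 t₀ ht₀, sub_zero]
        have h4 : (fun x => R₀ * ψ (t₀, x) * (1 - φ (t₀, x) - ψ (t₀, x)))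
            = fun x => R₀ * ψ (t₀, x) - R₀ * (ψ (t₀, x) * φ (t₀, x)) -
                R₀ * ψ (t₀, x) ^ 2 := by
          ext x; ring
        rw [h4]
        have i1 : Integrable fun x => R₀ * ψ (t₀, x) :=
          (hintψ t₀ (Ioo_subset_Icc_self ht₀)).const_mul R₀
        have i2 : Integrable fun x => R₀ * (ψ (t₀, x) * φ (t₀, x)) :=
          (hintψφ t₀ (Ioo_subset_Icc_self ht₀)).const_mul R₀
        have i3 : Integrable fun x => R₀ * ψ (t₀, x) ^ 2 :=
          (hintψ2 t₀ (Ioo_subset_Icc_self ht₀)).const_mul R₀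
        have i12 : Integrable fun x =>
            R₀ * ψ (t₀, x) - R₀ * (ψ (t₀, x) * φ (t₀, x)) := i1.sub i2
        rw [integral_sub i12 i3, integral_sub i1 i2,
          integral_const_mul, integral_const_mul, integral_const_mul]
        rw [hFdef, hPdef, hGdef]
        ring
      rw [← hval]
      exact key.2
    · -- a.e. strong measurability of slices near t₀
      filter_upwards [Filter.mem_of_superset (Metric.ball_mem_nhds t₀ hε) hball] with s hs
      exact ((hslice s (Ioo_subset_Icc_self hs))).aestronglyMeasurable
    · exact hintψ t₀ (Ioo_subset_Icc_self ht₀)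
    · -- measurability of q t₀
      have : Continuous (q t₀) := by
        rw [← continuousOn_univ]
        exact hqcont.comp
          ((continuous_const.prodMk continuous_id).continuousOn :
            ContinuousOn (fun x : EuclideanSpace ℝ (Fin (n+1)) =>
              ((t₀, x) : ℝ × EuclideanSpace ℝ (Fin (n+1)))) univ)
          (fun x _ => ⟨ht₀, mem_univ x⟩)
      exact this.aestronglyMeasurable
    · -- uniform bound
      apply Filter.Eventually.of_forall
      intro x s hs
      by_cases hx : x ∈ K
      · have h1 : (s, x) ∈ Metric.closedBall t₀ ε ×ˢ K :=
          ⟨Metric.ball_subset_closedBall hs, hx⟩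
        have h2 := hM _ h1
        simpa [hqdef, Set.indicator_of_mem hx] using h2
      · have h1 : q s x = 0 := hq0 s (hball hs) x hx
        simp [h1, Set.indicator_of_notMem hx]
    · -- integrability of the bound
      rw [integrable_indicator_iff hK.measurableSet]
      exact integrableOn_const hK.measure_lt_top.ne
    · -- differentiability on the ball
      apply Filter.Eventually.of_forall
      intro x s hs
      exact hq s (hball hs) x
  -- Gronwall estimate
  have hgron : ∀ t ∈ Icc (0:ℝ) T, F t ≤ Real.exp (R₀ * t) * F 0 := by
    have hexp : ∀ t : ℝ, HasDerivAt (fun u => Real.exp (-R₀ * u))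
        (-R₀ * Real.exp (-R₀ * t)) t := by
      intro t
      have h1 : HasDerivAt (fun u : ℝ => -R₀ * u) (-R₀) t := by
        simpa using (hasDerivAt_id t).const_mul (-R₀)
      have h2 := (Real.hasDerivAt_exp (-R₀ * t)).comp t h1
      have h3 : Real.exp (-R₀ * t) * (-R₀) = -R₀ * Real.exp (-R₀ * t) := by ring
      exact h3 ▸ h2
    have hhd : ∀ t ∈ Ioo (0:ℝ) T, HasDerivAt (fun u => Real.exp (-R₀ * u) * F u)
        (-R₀ * Real.exp (-R₀ * t) * F t +
          Real.exp (-R₀ * t) * (R₀ * (F t - P t - Gf t))) t := by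
      intro t ht
      exact (hexp t).mul (hFderiv t ht)
    have hhd' : DifferentiableOn ℝ (fun u => Real.exp (-R₀ * u) * F u)
        (interior (Icc (0:ℝ) T)) := by
      rw [interior_Icc]
      exact fun t ht => (hhd t ht).differentiableAt.differentiableWithinAt
    have hanti : AntitoneOn (fun u => Real.exp (-R₀ * u) * F u) (Icc (0:ℝ) T) := by
      apply antitoneOn_of_deriv_nonpos (convex_Icc 0 T)
      · exact ((Real.continuous_exp.comp (continuous_const.mul continuous_id)).continuousOn).mul
          hFcont
      · exact hhd'
      · intro t ht
        rw [interior_Icc] at ht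
        rw [(hhd t ht).deriv]
        have hP := hPnn t (Ioo_subset_Icc_self ht)
        have hG := hGnn t (Ioo_subset_Icc_self ht)
        have he : (0:ℝ) < Real.exp (-R₀ * t) := Real.exp_pos _
        nlinarith [mul_nonneg (mul_nonneg he.le hR.le) (add_nonneg hP hG)]
    intro t ht
    have h1 : Real.exp (-R₀ * t) * F t ≤ Real.exp (-R₀ * 0) * F 0 :=
      hanti (left_mem_Icc.2 hT.le) ht ht.1
    have h2 : Real.exp (-R₀ * 0) = 1 := by norm_num
    rw [h2, one_mul] at h1
    have h3 := mul_le_mul_of_nonneg_left h1 (Real.exp_pos (R₀ * t)).le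
    rw [← mul_assoc, ← Real.exp_add] at h3
    simpa using h3
  -- integrability on [0, T]
  have huIcc : uIcc (0:ℝ) T = Icc 0 T := uIcc_of_le hT.le
  have hFint : IntervalIntegrable F volume 0 T := by
    apply ContinuousOn.intervalIntegrable
    rw [huIcc]; exact hFcont
  have hGint : IntervalIntegrable Gf volume 0 T := by
    apply ContinuousOn.intervalIntegrable
    rw [huIcc]; exact hGcont
  -- the auxiliary primitive
  have hgcont : ContinuousOn (fun s => R₀ * (F s - Gf s)) (Icc (0:ℝ) T) :=
    continuousOn_const.mul (hFcont.sub hGcont)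
  have hgio : IntegrableOn (fun s => R₀ * (F s - Gf s)) (Icc (0:ℝ) T) :=
    hgcont.integrableOn_compact isCompact_Icc
  have hgio' : IntegrableOn (fun s => R₀ * (F s - Gf s)) (uIcc (0:ℝ) T) := by
    rw [huIcc]; exact hgio
  have hprim : ContinuousOn (fun t => ∫ s in (0:ℝ)..t, R₀ * (F s - Gf s)) (Icc (0:ℝ) T) := by
    rw [← huIcc]
    exact intervalIntegral.continuousOn_primitive_interval hgio'
  have hWcont : ContinuousOn
      (fun t => (∫ s in (0:ℝ)..t, R₀ * (F s - Gf s)) - F t) (Icc (0:ℝ) T) :=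
    hprim.sub hFcont
  have hWd : ∀ t ∈ Ioo (0:ℝ) T, HasDerivAt
      (fun t => (∫ s in (0:ℝ)..t, R₀ * (F s - Gf s)) - F t)
      (R₀ * (F t - Gf t) - R₀ * (F t - P t - Gf t)) t := by
    intro t ht
    have h1 : IntervalIntegrable (fun s => R₀ * (F s - Gf s)) volume 0 t := by
      apply ContinuousOn.intervalIntegrable
      apply hgcont.mono
      rw [uIcc_of_le ht.1.le]
      exact Icc_subset_Icc le_rfl ht.2.le
    have h2 : StronglyMeasurableAtFilter (fun s => R₀ * (F s - Gf s)) (nhds t) :=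
      ContinuousOn.stronglyMeasurableAtFilter isOpen_Ioo
        (hgcont.mono Ioo_subset_Icc_self) t ht
    have h3 : ContinuousAt (fun s => R₀ * (F s - Gf s)) t :=
      (hgcont.mono Ioo_subset_Icc_self).continuousAt (Ioo_mem_nhds ht.1 ht.2)
    exact (intervalIntegral.integral_hasDerivAt_right h1 h2 h3).sub (hFderiv t ht)
  have hWmono : MonotoneOn
      (fun t => (∫ s in (0:ℝ)..t, R₀ * (F s - Gf s)) - F t) (Icc (0:ℝ) T) := by
    apply monotoneOn_of_deriv_nonneg (convex_Icc 0 T) hWcont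
    · rw [interior_Icc]
      exact fun t ht => (hWd t ht).differentiableAt.differentiableWithinAt
    · intro t ht
      rw [interior_Icc] at ht
      rw [(hWd t ht).deriv]
      have hP := hPnn t (Ioo_subset_Icc_self ht)
      nlinarith
  have hW0T : (∫ s in (0:ℝ)..(0:ℝ), R₀ * (F s - Gf s)) - F 0 ≤
      (∫ s in (0:ℝ)..T, R₀ * (F s - Gf s)) - F T :=
    hWmono (left_mem_Icc.2 hT.le) (right_mem_Icc.2 hT.le) hT.le
  rw [intervalIntegral.integral_same] at hW0T
  have hlin : (∫ s in (0:ℝ)..T, R₀ * (F s - Gf s)) =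
      R₀ * ((∫ s in (0:ℝ)..T, F s) - ∫ s in (0:ℝ)..T, Gf s) := by
    rw [intervalIntegral.integral_const_mul, intervalIntegral.integral_sub hFint hGint]
  -- bound ∫ F by the exponential
  have hexpint : IntervalIntegrable (fun s => Real.exp (R₀ * s) * F 0) volume 0 T :=
    ((Real.continuous_exp.comp (continuous_const.mul continuous_id)).mul
      continuous_const).intervalIntegrable 0 T
  have hFle : (∫ s in (0:ℝ)..T, F s) ≤ ∫ s in (0:ℝ)..T, Real.exp (R₀ * s) * F 0 := by
    apply intervalIntegral.integral_mono_on hT.le hFint hexpint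
    exact fun s hs => hgron s hs
  have hexpval : (∫ s in (0:ℝ)..T, Real.exp (R₀ * s) * F 0) =
      ((Real.exp (R₀ * T) - 1) / R₀) * F 0 := by
    rw [intervalIntegral.integral_mul_const]
    congr 1
    have hd : ∀ s ∈ uIcc (0:ℝ) T, HasDerivAt (fun u => Real.exp (R₀ * u) / R₀)
        (Real.exp (R₀ * s)) s := by
      intro s _
      have h1 : HasDerivAt (fun u : ℝ => R₀ * u) R₀ s := by
        simpa using (hasDerivAt_id s).const_mul R₀
      have h2 := (Real.hasDerivAt_exp (R₀ * s)).comp s h1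
      have h3 := h2.div_const R₀
      have : Real.exp (R₀ * s) * R₀ / R₀ = Real.exp (R₀ * s) := by
        field_simp
      rwa [this] at h3
    have hci : IntervalIntegrable (fun s => Real.exp (R₀ * s)) volume 0 T :=
      (Real.continuous_exp.comp (continuous_const.mul continuous_id)).intervalIntegrable 0 T
    rw [intervalIntegral.integral_eq_sub_of_hasDerivAt (fun s hs => hd s hs) hci]
    rw [mul_zero, Real.exp_zero]
    ring
  -- final combination
  have hFT : 0 ≤ F T := hFnn T (right_mem_Icc.2 hT.le)
  have hF0 : 0 ≤ F 0 := hFnn 0 (left_mem_Icc.2 hT.le)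
  have hmain : R₀ * (∫ s in (0:ℝ)..T, Gf s) ≤ Real.exp (R₀ * T) * F 0 := by
    have h1 : R₀ * (∫ s in (0:ℝ)..T, Gf s) ≤
        R₀ * (∫ s in (0:ℝ)..T, F s) - F T + F 0 := by
      rw [hlin] at hW0T
      linarith
    have h2 : R₀ * (∫ s in (0:ℝ)..T, F s) ≤ R₀ * (((Real.exp (R₀ * T) - 1) / R₀) * F 0) := by
      rw [← hexpval]
      exact mul_le_mul_of_nonneg_left hFle hR.le
    have h3 : R₀ * (((Real.exp (R₀ * T) - 1) / R₀) * F 0) =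
        (Real.exp (R₀ * T) - 1) * F 0 := by
      field_simp
    rw [h3] at h2
    linarith
  exact hmain
end

section
/- Let d ∈ {1,2,3}, T > 0 and let γ, α, D, R₀ > 0. Let ψ, φ : [0,T] × ℝᵈ → ℝ be C² functions, with ψ(t,·) supported in a fixed compact set K ⊂ ℝᵈ for all t ∈ [0,T], satisfying on (0,T) × ℝᵈ the system ∂_t ψ + ∇_x·[ψ φ(1-φ)(α∇_x φ - D∇_x ψ)] = R₀ ψ (1-φ-ψ) and ∂_t φ = -γ φ ψ. Then the energy E(t) = ∫_{ℝᵈ} ψ(t)·((D/2)ψ(t) - α φ(t)) dx is differentiable on (0,T) with E'(t) = -∫_{ℝᵈ} ψ φ(1-φ) |α∇_x φ - D∇_x ψ|² dx + ∫_{ℝᵈ} ψ R₀(1-φ-ψ)(Dψ - αφ) dx + αγ ∫_{ℝᵈ} ψ² φ dx. -/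
open MeasureTheory

namespace Stmt4Aux

open InnerProductSpace Set

variable {d : ℕ}

lemma my_integrable (h : EuclideanSpace ℝ (Fin d) → ℝ) (hc : Continuous h)
    (K : Set (EuclideanSpace ℝ (Fin d))) (hK : IsCompact K)
    (hs : ∀ x ∉ K, h x = 0) : Integrable h :=
  hc.integrable_of_hasCompactSupport (HasCompactSupport.intro hK hs)

lemma grad_coord (f : EuclideanSpace ℝ (Fin d) → ℝ) (x : EuclideanSpace ℝ (Fin d)) (i : Fin d) :
    (gradient f x) i = fderiv ℝ f x (EuclideanSpace.single i 1) := by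
  have : ⟪gradient f x, EuclideanSpace.single i 1⟫_ℝ
      = fderiv ℝ f x (EuclideanSpace.single i 1) := by
    rw [gradient]; simp
  rw [EuclideanSpace.inner_single_right] at this
  simpa using this

lemma grad_smooth (f : EuclideanSpace ℝ (Fin d) → ℝ) (hf : ContDiff ℝ 2 f) :
    ContDiff ℝ 1 (gradient f) := by
  have h1 : ContDiff ℝ 1 (fderiv ℝ f) := hf.fderiv_right (by norm_num)
  have : gradient f = (fun x => (toDual ℝ (EuclideanSpace ℝ (Fin d))).symm (fderiv ℝ f x)) := rfl
  rw [this]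
  exact (((toDual ℝ (EuclideanSpace ℝ (Fin d))).symm.toContinuousLinearEquiv :
    _ ≃L[ℝ] _).contDiff).comp h1

lemma ediv_cont (G : EuclideanSpace ℝ (Fin d) → EuclideanSpace ℝ (Fin d))
    (hG : ContDiff ℝ 1 G) : Continuous (ediv G) := by
  have h := hG.continuous_fderiv one_ne_zero
  exact continuous_finset_sum _ fun i _ =>
    (EuclideanSpace.proj (𝕜 := ℝ) i).continuous.comp (h.clm_apply continuous_const)

lemma ediv_zero_outside (G : EuclideanSpace ℝ (Fin d) → EuclideanSpace ℝ (Fin d))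
    (K : Set (EuclideanSpace ℝ (Fin d))) (hKc : IsClosed K) (hG0 : ∀ x ∉ K, G x = 0)
    {x : EuclideanSpace ℝ (Fin d)} (hx : x ∉ K) : ediv G x = 0 := by
  have hts : tsupport G ⊆ K := closure_minimal (Function.support_subset_iff'.2 hG0) hKc
  have : fderiv ℝ G x = 0 := by
    by_contra h
    exact hx (hts (support_fderiv_subset ℝ (Function.mem_support.2 h)))
  simp [ediv, this]

lemma my_ibp (G : EuclideanSpace ℝ (Fin d) → EuclideanSpace ℝ (Fin d))
    (g : EuclideanSpace ℝ (Fin d) → ℝ) (hG : ContDiff ℝ 1 G) (hg : ContDiff ℝ 2 g)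
    (K : Set (EuclideanSpace ℝ (Fin d))) (hK : IsCompact K) (hG0 : ∀ x ∉ K, G x = 0) :
    ∫ x, ediv G x * g x
      = - ∫ x, ∑ i, G x i * fderiv ℝ g x (EuclideanSpace.single i 1) := by
  have hKc : IsClosed K := hK.isClosed
  have hgc : Continuous g := hg.continuous
  have hgd : Differentiable ℝ g := hg.differentiable (by norm_num)
  have hg' : Continuous (fderiv ℝ g) := hg.continuous_fderiv (by norm_num)
  have hGi : ∀ i : Fin d, ContDiff ℝ 1 (fun y => G y i) := fun i =>
    (EuclideanSpace.proj (𝕜 := ℝ) i).contDiff.comp hG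
  have hGi0 : ∀ (i : Fin d), ∀ x ∉ K, G x i = 0 := fun i x hx => by rw [hG0 x hx]; rfl
  have hGi' : ∀ i : Fin d, Continuous (fderiv ℝ (fun y => G y i)) := fun i =>
    (hGi i).continuous_fderiv one_ne_zero
  have hGits : ∀ i : Fin d, tsupport (fun y => G y i) ⊆ K := fun i =>
    closure_minimal (Function.support_subset_iff'.2 (hGi0 i)) hKc
  have hGifd0 : ∀ (i : Fin d), ∀ x ∉ K, fderiv ℝ (fun y => G y i) x = 0 := by
    intro i x hx
    by_contra h
    exact hx (hGits i (support_fderiv_subset ℝ (Function.mem_support.2 h)))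
  have hdiv : ∀ x, ediv G x * g x
      = ∑ i, fderiv ℝ (fun y => G y i) x (EuclideanSpace.single i 1) * g x := by
    intro x
    rw [ediv, Finset.sum_mul]
    congr 1; ext i
    congr 1
    rw [show (fun y => G y i) = (⇑(EuclideanSpace.proj (𝕜 := ℝ) i) ∘ G) from rfl,
      fderiv_comp x (EuclideanSpace.proj i).differentiableAt
        ((hG.differentiable one_ne_zero) x)]
    rw [(EuclideanSpace.proj (𝕜 := ℝ) i).fderiv]
    simp
  have hint1 : ∀ i : Fin d, Integrable
      (fun x => fderiv ℝ (fun y => G y i) x (EuclideanSpace.single i 1) * g x) := by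
    intro i
    apply my_integrable _ (((hGi' i).clm_apply continuous_const).mul hgc) K hK
    intro x hx; simp only [Pi.mul_apply]; rw [hGifd0 i x hx]; simp
  have hint2 : ∀ i : Fin d, Integrable
      (fun x => G x i * fderiv ℝ g x (EuclideanSpace.single i 1)) := by
    intro i
    refine my_integrable (fun x => G x i * fderiv ℝ g x (EuclideanSpace.single i 1)) ?_ K hK ?_
    · exact (((EuclideanSpace.proj (𝕜 := ℝ) i).continuous.comp hG.continuous)).mul
        (hg'.clm_apply continuous_const)
    · intro x hx; show G x i * _ = 0; rw [hGi0 i x hx]; simp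
  have hint3 : ∀ i : Fin d, Integrable (fun x => G x i * g x) := by
    intro i
    refine my_integrable (fun x => G x i * g x) ?_ K hK ?_
    · exact ((EuclideanSpace.proj (𝕜 := ℝ) i).continuous.comp hG.continuous).mul hgc
    · intro x hx; show G x i * _ = 0; rw [hGi0 i x hx]; simp
  calc ∫ x, ediv G x * g x
      = ∫ x, ∑ i, fderiv ℝ (fun y => G y i) x (EuclideanSpace.single i 1) * g x := by
        simp only [hdiv]
    _ = ∑ i, ∫ x, fderiv ℝ (fun y => G y i) x (EuclideanSpace.single i 1) * g x := by
        rw [integral_finset_sum]; intro i _; exact hint1 i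
    _ = ∑ i, - ∫ x, G x i * fderiv ℝ g x (EuclideanSpace.single i 1) := by
        congr 1; ext i
        have := integral_mul_fderiv_eq_neg_fderiv_mul_of_integrable (hint1 i) (hint2 i) (hint3 i)
          (fun x _ => (hGi i).differentiable one_ne_zero x) (fun x _ => hgd x)
        linarith
    _ = - ∫ x, ∑ i, G x i * fderiv ℝ g x (EuclideanSpace.single i 1) := by
        rw [Finset.sum_neg_distrib, ← integral_finset_sum _ (fun i _ => hint2 i)]

end Stmt4Aux

namespace Stmt4Aux

lemma key_integral {d : ℕ} (α D R₀ γ : ℝ)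
    (a b pa pb : EuclideanSpace ℝ (Fin d) → ℝ)
    (haC : ContDiff ℝ 2 a) (hbC : ContDiff ℝ 2 b)
    (K : Set (EuclideanSpace ℝ (Fin d))) (hK : IsCompact K)
    (ha0 : ∀ x ∉ K, a x = 0)
    (hp1 : ∀ x, pa x + ediv (fun y =>
        (a y * (b y * (1 - b y))) • (α • gradient b y - D • gradient a y)) x
        = R₀ * a x * (1 - b x - a x))
    (hp2 : ∀ x, pb x = -γ * b x * a x) :
    ∫ x, (pa x * (D / 2 * a x - α * b x) + a x * (D / 2 * pa x - α * pb x))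
      = -(∫ x, a x * (b x * (1 - b x)) * ‖α • gradient b x - D • gradient a x‖ ^ 2)
        + (∫ x, a x * (R₀ * (1 - b x - a x)) * (D * a x - α * b x))
        + α * γ * ∫ x, a x ^ 2 * b x := by
  have hKc : IsClosed K := hK.isClosed
  set Fv : EuclideanSpace ℝ (Fin d) → EuclideanSpace ℝ (Fin d) :=
    fun y => (a y * (b y * (1 - b y))) • (α • gradient b y - D • gradient a y) with hFvdef
  set g : EuclideanSpace ℝ (Fin d) → ℝ := fun x => D * a x - α * b x with hgdef
  have hga : ContDiff ℝ 1 (gradient a) := grad_smooth a haC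
  have hgb : ContDiff ℝ 1 (gradient b) := grad_smooth b hbC
  have ha1 : ContDiff ℝ 1 a := haC.of_le one_le_two
  have hb1 : ContDiff ℝ 1 b := hbC.of_le one_le_two
  have hFvC : ContDiff ℝ 1 Fv := by
    rw [hFvdef]
    exact (ha1.mul (hb1.mul (contDiff_const.sub hb1))).smul
      ((hgb.const_smul α).sub (hga.const_smul D))
  have hFv0 : ∀ x ∉ K, Fv x = 0 := by
    intro x hx
    rw [hFvdef]
    simp [ha0 x hx]
  have hgC : ContDiff ℝ 2 g := (contDiff_const.mul haC).sub (contDiff_const.mul hbC)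
  have hgd : Differentiable ℝ g := hgC.differentiable (by norm_num)
  have had : Differentiable ℝ a := haC.differentiable (by norm_num)
  have hbd : Differentiable ℝ b := hbC.differentiable (by norm_num)
  -- fderiv of g in terms of gradients
  have hfg : ∀ (x : EuclideanSpace ℝ (Fin d)) (i : Fin d),
      fderiv ℝ g x (EuclideanSpace.single i 1)
        = D * (gradient a x) i - α * (gradient b x) i := by
    intro x i
    rw [grad_coord, grad_coord]
    have h1 : HasFDerivAt a (fderiv ℝ a x) x := (had x).hasFDerivAt
    have h2 : HasFDerivAt b (fderiv ℝ b x) x := (hbd x).hasFDerivAt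
    have h3 : HasFDerivAt g (D • fderiv ℝ a x - α • fderiv ℝ b x) x :=
      (h1.const_mul D).sub (h2.const_mul α)
    rw [h3.fderiv]
    simp
  -- pointwise identity for the IBP sum
  have hpt : ∀ x, ∑ i, Fv x i * fderiv ℝ g x (EuclideanSpace.single i 1)
      = -(a x * (b x * (1 - b x)) * ‖α • gradient b x - D • gradient a x‖ ^ 2) := by
    intro x
    have hnorm : ‖α • gradient b x - D • gradient a x‖ ^ 2
        = ∑ i, (α * (gradient b x) i - D * (gradient a x) i)
            * (α * (gradient b x) i - D * (gradient a x) i) := by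
      rw [← real_inner_self_eq_norm_sq]
      rw [PiLp.inner_apply]
      simp [sq]
    have hcoord : ∀ i : Fin d, Fv x i
        = a x * (b x * (1 - b x)) * (α * (gradient b x) i - D * (gradient a x) i) := by
      intro i
      rw [hFvdef]
      simp [smul_eq_mul]
    rw [hnorm, Finset.mul_sum, ← Finset.sum_neg_distrib]
    congr 1; ext i
    rw [hcoord i, hfg x i]
    ring
  -- integrability facts
  have hFvcont : Continuous Fv := hFvC.continuous
  have hedivK : ∀ x ∉ K, ediv Fv x = 0 := fun x hx => ediv_zero_outside Fv K hKc hFv0 hx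
  have hint_divg : Integrable (fun x => ediv Fv x * g x) := by
    refine my_integrable _ ((ediv_cont Fv hFvC).mul hgC.continuous) K hK ?_
    intro x hx; rw [hedivK x hx]; simp
  have hintP : Integrable (fun x => a x * (R₀ * (1 - b x - a x)) * (D * a x - α * b x)) := by
    refine my_integrable _ ?_ K hK ?_
    · exact ((haC.continuous).mul (continuous_const.mul
        ((continuous_const.sub hbC.continuous).sub haC.continuous))).mul
        ((continuous_const.mul haC.continuous).sub (continuous_const.mul hbC.continuous))
    · intro x hx; rw [ha0 x hx]; ring
  have hintQ : Integrable (fun x => a x ^ 2 * b x) := by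
    refine my_integrable _ ((haC.continuous.pow 2).mul hbC.continuous) K hK ?_
    intro x hx; rw [ha0 x hx]; ring
  have hintC : Integrable (fun x => a x * (b x * (1 - b x))
      * ‖α • gradient b x - D • gradient a x‖ ^ 2) := by
    refine my_integrable _ ?_ K hK ?_
    · exact ((haC.continuous).mul (hbC.continuous.mul
        (continuous_const.sub hbC.continuous))).mul
        (((hgb.continuous.const_smul α).sub (hga.continuous.const_smul D)).norm.pow 2)
    · intro x hx; rw [ha0 x hx]; ring
  -- the IBP identity
  have hIBP : ∫ x, ediv Fv x * g x
      = ∫ x, a x * (b x * (1 - b x)) * ‖α • gradient b x - D • gradient a x‖ ^ 2 := by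
    rw [my_ibp Fv g hFvC hgC K hK hFv0]
    rw [show (fun x => ∑ i, Fv x i * fderiv ℝ g x (EuclideanSpace.single i 1))
        = (fun x => -(a x * (b x * (1 - b x))
            * ‖α • gradient b x - D • gradient a x‖ ^ 2)) from funext hpt]
    rw [integral_neg, neg_neg]
  -- pointwise rewriting of the integrand
  have hptmain : ∀ x, pa x * (D / 2 * a x - α * b x) + a x * (D / 2 * pa x - α * pb x)
      = -(ediv Fv x * g x)
        + a x * (R₀ * (1 - b x - a x)) * (D * a x - α * b x)
        + α * γ * (a x ^ 2 * b x) := by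
    intro x
    have hpa : pa x = R₀ * a x * (1 - b x - a x) - ediv Fv x := by
      have := hp1 x; linarith
    rw [hpa, hp2 x, hgdef]
    ring
  rw [show (fun x => pa x * (D / 2 * a x - α * b x) + a x * (D / 2 * pa x - α * pb x))
      = (fun x => -(ediv Fv x * g x)
          + a x * (R₀ * (1 - b x - a x)) * (D * a x - α * b x)
          + α * γ * (a x ^ 2 * b x)) from funext hptmain]
  have hI1 : Integrable (fun x => -(ediv Fv x * g x)) := hint_divg.neg
  have hI2 : Integrable (fun x => -(ediv Fv x * g x)
      + a x * (R₀ * (1 - b x - a x)) * (D * a x - α * b x)) := hI1.add hintP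
  have hI3 : Integrable (fun x => α * γ * (a x ^ 2 * b x)) := hintQ.const_mul _
  calc ∫ x, (-(ediv Fv x * g x)
          + a x * (R₀ * (1 - b x - a x)) * (D * a x - α * b x)
          + α * γ * (a x ^ 2 * b x))
      = (∫ x, (-(ediv Fv x * g x)
          + a x * (R₀ * (1 - b x - a x)) * (D * a x - α * b x)))
        + ∫ x, α * γ * (a x ^ 2 * b x) := integral_add hI2 hI3
    _ = ((∫ x, -(ediv Fv x * g x))
          + ∫ x, a x * (R₀ * (1 - b x - a x)) * (D * a x - α * b x))
        + ∫ x, α * γ * (a x ^ 2 * b x) := by rw [integral_add hI1 hintP]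
    _ = -(∫ x, a x * (b x * (1 - b x)) * ‖α • gradient b x - D • gradient a x‖ ^ 2)
        + (∫ x, a x * (R₀ * (1 - b x - a x)) * (D * a x - α * b x))
        + α * γ * ∫ x, a x ^ 2 * b x := by
          rw [integral_neg, hIBP, integral_const_mul]

end Stmt4Aux

namespace Stmt4Aux

open Set

variable {d : ℕ}

lemma strip_contDiffAt {T : ℝ} {f : ℝ × EuclideanSpace ℝ (Fin d) → ℝ}
    (hf : ContDiffOn ℝ 2 f (Icc 0 T ×ˢ univ)) {s : ℝ} (hs : s ∈ Ioo 0 T)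
    (x : EuclideanSpace ℝ (Fin d)) : ContDiffAt ℝ 2 f (s, x) := by
  apply hf.contDiffAt
  have hmem : Ioo 0 T ×ˢ (univ : Set (EuclideanSpace ℝ (Fin d))) ∈ nhds (s, x) :=
    (isOpen_Ioo.prod isOpen_univ).mem_nhds ⟨hs, trivial⟩
  exact Filter.mem_of_superset hmem (prod_mono Ioo_subset_Icc_self subset_rfl)

lemma slice_contDiff {T : ℝ} {f : ℝ × EuclideanSpace ℝ (Fin d) → ℝ}
    (hf : ContDiffOn ℝ 2 f (Icc 0 T ×ˢ univ)) {s : ℝ} (hs : s ∈ Ioo 0 T) :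
    ContDiff ℝ 2 (fun x => f (s, x)) := by
  rw [contDiff_iff_contDiffAt]
  intro x
  exact (strip_contDiffAt hf hs x).comp x (contDiffAt_const.prodMk contDiffAt_id)

lemma slice_hasDerivAt {T : ℝ} {f : ℝ × EuclideanSpace ℝ (Fin d) → ℝ}
    (hf : ContDiffOn ℝ 2 f (Icc 0 T ×ˢ univ)) {s : ℝ} (hs : s ∈ Ioo 0 T)
    (x : EuclideanSpace ℝ (Fin d)) :
    HasDerivAt (fun τ => f (τ, x))
      (fderiv ℝ f (s, x) ((1 : ℝ), (0 : EuclideanSpace ℝ (Fin d)))) s := by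
  have hd : HasFDerivAt f (fderiv ℝ f (s, x)) (s, x) :=
    ((strip_contDiffAt hf hs x).differentiableAt (by norm_num)).hasFDerivAt
  have hc : HasDerivAt (fun τ : ℝ => (τ, x)) ((1 : ℝ), (0 : EuclideanSpace ℝ (Fin d))) s :=
    (hasDerivAt_id s).prodMk (hasDerivAt_const s x)
  exact hd.comp_hasDerivAt s hc

end Stmt4Aux


open Stmt4Aux Set

/-- Energy identity (Step 2 of Proposition 1): for a compactly supported classical
solution of the system `∂ₜψ + ∇·[ψ φ(1-φ)(α∇φ - D∇ψ)] = R₀ψ(1-φ-ψ)`,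
`∂ₜφ = -γφψ`, the energy `E(t) = ∫ ψ((D/2)ψ - αφ)` is differentiable on `(0,T)` with
`E' = -∫ ψφ(1-φ)|α∇φ - D∇ψ|² + ∫ ψ R₀(1-φ-ψ)(Dψ - αφ) + αγ ∫ ψ²φ`. -/
theorem stmt_4 (d : ℕ) (hd : d = 1 ∨ d = 2 ∨ d = 3) (T γ α D R₀ : ℝ)
    (hT : 0 < T) (hγ : 0 < γ) (hα : 0 < α) (hD : 0 < D) (hR : 0 < R₀)
    (ψ φ : ℝ × EuclideanSpace ℝ (Fin d) → ℝ)
    (hψC2 : ContDiffOn ℝ 2 ψ (Set.Icc 0 T ×ˢ Set.univ))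
    (hφC2 : ContDiffOn ℝ 2 φ (Set.Icc 0 T ×ˢ Set.univ))
    (K : Set (EuclideanSpace ℝ (Fin d))) (hK : IsCompact K)
    (hsupp : ∀ t ∈ Set.Icc (0 : ℝ) T, (Function.support fun x => ψ (t, x)) ⊆ K)
    (hpde1 : ∀ t ∈ Set.Ioo (0 : ℝ) T, ∀ x,
      deriv (fun s => ψ (s, x)) t +
        ediv (fun y => (ψ (t, y) * (φ (t, y) * (1 - φ (t, y)))) •
          (α • gradient (fun z => φ (t, z)) y - D • gradient (fun z => ψ (t, z)) y)) x
        = R₀ * ψ (t, x) * (1 - φ (t, x) - ψ (t, x)))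
    (hpde2 : ∀ t ∈ Set.Ioo (0 : ℝ) T, ∀ x,
      deriv (fun s => φ (s, x)) t = -γ * φ (t, x) * ψ (t, x)) :
    ∀ t ∈ Set.Ioo (0 : ℝ) T,
      HasDerivAt (fun τ => ∫ x, ψ (τ, x) * (D / 2 * ψ (τ, x) - α * φ (τ, x)))
        (-(∫ x, ψ (t, x) * (φ (t, x) * (1 - φ (t, x))) *
              ‖α • gradient (fun z => φ (t, z)) x - D • gradient (fun z => ψ (t, z)) x‖ ^ 2)
          + (∫ x, ψ (t, x) * (R₀ * (1 - φ (t, x) - ψ (t, x))) *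
              (D * ψ (t, x) - α * φ (t, x)))
          + α * γ * ∫ x, ψ (t, x) ^ 2 * φ (t, x)) t := by
  intro t ht
  -- vanishing of ψ and its derivative outside K
  have hψ0 : ∀ s ∈ Ioo 0 T, ∀ x ∉ K, ψ (s, x) = 0 := by
    intro s hs x hx
    by_contra h
    exact hx (hsupp s ⟨hs.1.le, hs.2.le⟩ (Function.mem_support.2 h))
  have hfψ0 : ∀ s ∈ Ioo 0 T, ∀ x ∉ K, fderiv ℝ ψ (s, x) = 0 := by
    intro s hs x hx
    have hU : IsOpen (Ioo 0 T ×ˢ Kᶜ) := isOpen_Ioo.prod hK.isClosed.isOpen_compl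
    have hUmem : (Ioo 0 T ×ˢ Kᶜ) ∈ nhds (s, x) := hU.mem_nhds ⟨hs, hx⟩
    have heq : ψ =ᶠ[nhds (s, x)] fun _ => 0 :=
      Filter.eventually_of_mem hUmem (fun p hp => hψ0 p.1 hp.1 p.2 hp.2)
    rw [heq.fderiv_eq]
    exact fderiv_const_apply 0
  -- the time interval of radius ε around t
  set ε : ℝ := min t (T - t) / 2 with hεdef
  have hmin : 0 < min t (T - t) := lt_min ht.1 (by linarith [ht.2])
  have hε0 : 0 < ε := by positivity
  have hIccb : Icc (t - ε) (t + ε) ⊆ Ioo 0 T := by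
    intro s hs
    have h1 : ε < min t (T - t) := by rw [hεdef]; linarith
    have h2 : min t (T - t) ≤ t := min_le_left _ _
    have h3 : min t (T - t) ≤ T - t := min_le_right _ _
    exact ⟨by cases hs; linarith, by cases hs; linarith⟩
  have hball : Metric.ball t ε ⊆ Ioo 0 T := by
    intro s hs
    rw [Metric.mem_ball, Real.dist_eq, abs_sub_lt_iff] at hs
    exact hIccb ⟨by linarith [hs.1, hs.2], by linarith [hs.1, hs.2]⟩
  have hballIcc : Metric.ball t ε ⊆ Icc (t - ε) (t + ε) := by
    intro s hs
    rw [Metric.mem_ball, Real.dist_eq, abs_sub_lt_iff] at hs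
    exact ⟨by linarith [hs.2], by linarith [hs.1]⟩
  -- the derivative integrand
  set v₀ : ℝ × EuclideanSpace ℝ (Fin d) := ((1 : ℝ), (0 : EuclideanSpace ℝ (Fin d))) with hv₀
  set Φ : ℝ × EuclideanSpace ℝ (Fin d) → ℝ := fun p =>
    fderiv ℝ ψ p v₀ * (D / 2 * ψ p - α * φ p)
      + ψ p * (D / 2 * fderiv ℝ ψ p v₀ - α * fderiv ℝ φ p v₀) with hΦdef
  -- continuity of Φ on the open strip
  set Ω : Set (ℝ × EuclideanSpace ℝ (Fin d)) := Ioo 0 T ×ˢ univ with hΩdef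
  have hΩo : IsOpen Ω := isOpen_Ioo.prod isOpen_univ
  have hsubΩ : Ω ⊆ Icc 0 T ×ˢ univ := prod_mono Ioo_subset_Icc_self subset_rfl
  have hψΩ : ContDiffOn ℝ 2 ψ Ω := hψC2.mono hsubΩ
  have hφΩ : ContDiffOn ℝ 2 φ Ω := hφC2.mono hsubΩ
  have hfdψ : ContinuousOn (fderiv ℝ ψ) Ω := hψΩ.continuousOn_fderiv_of_isOpen hΩo one_le_two
  have hfdφ : ContinuousOn (fderiv ℝ φ) Ω := hφΩ.continuousOn_fderiv_of_isOpen hΩo one_le_two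
  have h1 : ContinuousOn (fun p => fderiv ℝ ψ p v₀) Ω := hfdψ.clm_apply continuousOn_const
  have h2 : ContinuousOn (fun p => fderiv ℝ φ p v₀) Ω := hfdφ.clm_apply continuousOn_const
  have hψcΩ : ContinuousOn ψ Ω := hψΩ.continuousOn
  have hφcΩ : ContinuousOn φ Ω := hφΩ.continuousOn
  have hΦc : ContinuousOn Φ Ω := by
    rw [hΦdef]
    exact (h1.mul ((continuousOn_const.mul hψcΩ).sub (continuousOn_const.mul hφcΩ))).add
      (hψcΩ.mul ((continuousOn_const.mul h1).sub (continuousOn_const.mul h2)))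
  -- Φ vanishes outside K
  have hΦ0 : ∀ s ∈ Ioo 0 T, ∀ x ∉ K, Φ (s, x) = 0 := by
    intro s hs x hx
    rw [hΦdef]
    simp only [hψ0 s hs x hx, hfψ0 s hs x hx]
    simp
  -- the uniform bound on the compact set
  have hScomp : IsCompact (Icc (t - ε) (t + ε) ×ˢ K) := isCompact_Icc.prod hK
  have hSsub : (Icc (t - ε) (t + ε) ×ˢ K) ⊆ Ω := by
    intro p hp
    exact ⟨hIccb hp.1, trivial⟩
  obtain ⟨C, hC⟩ := hScomp.exists_bound_of_continuousOn (hΦc.mono hSsub)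
  -- slices are continuous
  have hslψ : ∀ s ∈ Ioo 0 T, Continuous (fun x => ψ (s, x)) := fun s hs =>
    (slice_contDiff hψC2 hs).continuous
  have hslφ : ∀ s ∈ Ioo 0 T, Continuous (fun x => φ (s, x)) := fun s hs =>
    (slice_contDiff hφC2 hs).continuous
  -- differentiation under the integral sign
  have hdom := hasDerivAt_integral_of_dominated_loc_of_deriv_le
    (F := fun s x => ψ (s, x) * (D / 2 * ψ (s, x) - α * φ (s, x)))
    (F' := fun s x => Φ (s, x))
    (bound := K.indicator fun _ => C)
    (μ := volume) (x₀ := t) (Metric.ball_mem_nhds t hε0)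
    ?_ ?_ ?_ ?_ ?_ ?_
  · -- final computation of the derivative value
    obtain ⟨-, hderiv⟩ := hdom
    have hval : (∫ x, Φ (t, x))
        = -(∫ x, ψ (t, x) * (φ (t, x) * (1 - φ (t, x))) *
              ‖α • gradient (fun z => φ (t, z)) x - D • gradient (fun z => ψ (t, z)) x‖ ^ 2)
          + (∫ x, ψ (t, x) * (R₀ * (1 - φ (t, x) - ψ (t, x))) *
              (D * ψ (t, x) - α * φ (t, x)))
          + α * γ * ∫ x, ψ (t, x) ^ 2 * φ (t, x) := by
      have hkey := key_integral (d := d) α D R₀ γ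
        (fun x => ψ (t, x)) (fun x => φ (t, x))
        (fun x => fderiv ℝ ψ (t, x) v₀) (fun x => fderiv ℝ φ (t, x) v₀)
        (slice_contDiff hψC2 ht) (slice_contDiff hφC2 ht) K hK
        (fun x hx => hψ0 t ht x hx)
        (fun x => by
          have hdψ := (slice_hasDerivAt hψC2 ht x).deriv
          have h := hpde1 t ht x
          rw [hdψ] at h
          exact h)
        (fun x => by
          have hdφ := (slice_hasDerivAt hφC2 ht x).deriv
          have h := hpde2 t ht x
          rw [hdφ] at h
          exact h)
      exact hkey
    rw [← hval]
    exact hderiv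
  · -- measurability of slices near t
    have hmem : Ioo 0 T ∈ nhds t := isOpen_Ioo.mem_nhds ht
    filter_upwards [hmem] with τ hτ
    exact ((hslψ τ hτ).mul ((continuous_const.mul (hslψ τ hτ)).sub
      (continuous_const.mul (hslφ τ hτ)))).aestronglyMeasurable
  · -- integrability at t
    refine my_integrable (fun x => ψ (t, x) * (D / 2 * ψ (t, x) - α * φ (t, x)))
      ((hslψ t ht).mul ((continuous_const.mul (hslψ t ht)).sub
        (continuous_const.mul (hslφ t ht)))) K hK ?_
    intro x hx
    show ψ (t, x) * _ = 0
    rw [hψ0 t ht x hx]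
    ring
  · -- measurability of Φ (t, ·)
    have hcont : Continuous (fun x => Φ (t, x)) := by
      rw [continuous_iff_continuousAt]
      intro x
      exact (hΦc.continuousAt (hΩo.mem_nhds ⟨ht, trivial⟩)).comp
        (Continuous.prodMk_right t).continuousAt
    exact hcont.aestronglyMeasurable
  · -- the bound
    refine Filter.Eventually.of_forall (fun x => ?_)
    intro s hs
    show ‖Φ (s, x)‖ ≤ _
    by_cases hx : x ∈ K
    · rw [Set.indicator_of_mem hx]
      exact hC (s, x) ⟨hballIcc hs, hx⟩
    · rw [Set.indicator_of_notMem hx, hΦ0 s (hball hs) x hx]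
      simp
  · -- integrability of the bound
    exact (integrable_indicator_iff hK.measurableSet).2
      (integrableOn_const hK.measure_lt_top.ne)
  · -- differentiability in time
    refine Filter.Eventually.of_forall (fun x => ?_)
    intro s hs
    have hsI := hball hs
    have h1 := slice_hasDerivAt hψC2 hsI x
    have h2 := slice_hasDerivAt hφC2 hsI x
    exact h1.mul ((h1.const_mul (D / 2)).sub (h2.const_mul α))
end

section
/- Let d ∈ {1,2,3}, T > 0 and let γ, α, D, R₀ > 0. Let ψ, φ : [0,T] × ℝᵈ → ℝ be C² functions with ψ ≥ 0 and 0 ≤ φ ≤ 1, with ψ(t,·) supported in a fixed compact set K ⊂ ℝᵈ for all t ∈ [0,T], satisfying on (0,T) × ℝᵈ the equation ∂_t ψ + ∇_x·[ψ φ(1-φ)(α∇_x φ - D∇_x ψ)] = R₀ ψ (1-φ-ψ). Then the second moment M(t) = ∫_{ℝᵈ} (|x|²/2) ψ(t,x) dx is differentiable on (0,T) and satisfies M'(t) ≤ ∫_{ℝᵈ} (|x|²/2) ψ φ(1-φ) dx + (1/2) ∫_{ℝᵈ} ψ φ(1-φ) |α∇_x φ - D∇_x ψ|² dx + R₀ ∫_{ℝᵈ}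 (|x|²/2) ψ dx. -/
open MeasureTheory

lemma my_hasFDerivAt_half_normsq {d : ℕ} (x : EuclideanSpace ℝ (Fin d)) :
    HasFDerivAt (fun y : EuclideanSpace ℝ (Fin d) => ‖y‖ ^ 2 / 2) (innerSL ℝ x) x := by
  have h := (hasStrictFDerivAt_norm_sq x).hasFDerivAt
  have h2 := h.const_smul (R := ℝ) (1/2)
  have h3 : (fun y : EuclideanSpace ℝ (Fin d) => ‖y‖ ^ 2 / 2) = (1/2 : ℝ) • fun y => ‖y‖ ^ 2 := by
    funext y; simp only [Pi.smul_apply, smul_eq_mul]; ring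
  rw [h3]
  refine h2.congr_fderiv ?_
  ext y; simp only [ContinuousLinearMap.smul_apply, nsmul_eq_mul, smul_eq_mul]; push_cast; ring

lemma my_ibp {d : ℕ} (F : EuclideanSpace ℝ (Fin d) → EuclideanSpace ℝ (Fin d))
    (K : Set (EuclideanSpace ℝ (Fin d))) (hK : IsCompact K)
    (hF : ContDiff ℝ 1 F) (h0 : ∀ x ∉ K, F x = 0) :
    ∫ x, ‖x‖ ^ 2 / 2 * ediv F x = - ∫ x, (inner ℝ x (F x) : ℝ) := by
  classical
  set g : EuclideanSpace ℝ (Fin d) → ℝ := fun y => ‖y‖ ^ 2 / 2 with hg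
  have hgd : ∀ x, HasFDerivAt g (innerSL ℝ x) x := my_hasFDerivAt_half_normsq
  have hgc : Continuous g := by continuity
  have hFc : Continuous F := hF.continuous
  have hF' : Continuous (fderiv ℝ F) := hF.continuous_fderiv one_ne_zero
  -- coordinate functions
  have hFi : ∀ i : Fin d, ContDiff ℝ 1 (fun y => F y i) := by
    intro i
    exact (EuclideanSpace.proj i).contDiff.comp hF
  have hfderivFi : ∀ (i : Fin d) (x v), fderiv ℝ (fun y => F y i) x v = fderiv ℝ F x v i := by
    intro i x v
    have : HasFDerivAt (fun y => F y i)
        ((EuclideanSpace.proj (𝕜 := ℝ) i).comp (fderiv ℝ F x)) x :=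
      (EuclideanSpace.proj (𝕜 := ℝ) i).hasFDerivAt.comp x (hF.differentiable one_ne_zero x).hasFDerivAt
    rw [this.fderiv]
    rfl
  have hKc : IsClosed K := hK.isClosed
  have hInt : ∀ f : EuclideanSpace ℝ (Fin d) → ℝ, Continuous f → (∀ x ∉ K, f x = 0) →
      Integrable f := fun f hc hs =>
    hc.integrable_of_hasCompactSupport (HasCompactSupport.intro hK hs)
  have hFzero : ∀ x ∉ K, fderiv ℝ F x = 0 := by
    intro x hx
    have hev : F =ᶠ[nhds x] (fun _ => 0) :=
      Filter.eventually_of_mem (hKc.isOpen_compl.mem_nhds hx) h0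
    rw [hev.fderiv_eq, fderiv_fun_const]
    rfl
  have h1 : ∀ (i : Fin d) (x : EuclideanSpace ℝ (Fin d)),
      fderiv ℝ g x (EuclideanSpace.single i 1) = x i := by
    intro i x
    rw [(hgd x).fderiv]
    simp [real_inner_comm, EuclideanSpace.inner_single_right]
  have key : ∀ i : Fin d,
      ∫ x, g x * fderiv ℝ F x (EuclideanSpace.single i 1) i
        = - ∫ x, (x : EuclideanSpace ℝ (Fin d)) i * F x i := by
    intro i
    have e1 : (fun x : EuclideanSpace ℝ (Fin d) => g x * fderiv ℝ F x (EuclideanSpace.single i 1) i)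
        = fun x => g x * fderiv ℝ (fun y => F y i) x (EuclideanSpace.single i 1) := by
      funext x; rw [hfderivFi]
    have e2 : (fun x : EuclideanSpace ℝ (Fin d) => (x : EuclideanSpace ℝ (Fin d)) i * F x i)
        = fun x => fderiv ℝ g x (EuclideanSpace.single i 1) * F x i := by
      funext x; rw [h1]
    rw [e1, e2]
    apply integral_mul_fderiv_eq_neg_fderiv_mul_of_integrable
    · apply hInt _ ?_ ?_
      · rw [← e2]
        exact ((continuous_apply i).comp (PiLp.continuous_ofLp 2 _)).mul
          ((continuous_apply i).comp ((PiLp.continuous_ofLp 2 _).comp hFc))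
      · intro x hx; simp [h0 x hx]
    · apply hInt _ ?_ ?_
      · rw [← e1]
        exact (hgc.mul (((continuous_apply i).comp (PiLp.continuous_ofLp 2 _)).comp
          (hF'.clm_apply continuous_const)))
      · intro x hx; rw [hfderivFi]; simp [hFzero x hx]
    · apply hInt _ (hgc.mul ((continuous_apply i).comp ((PiLp.continuous_ofLp 2 _).comp hFc)))
      intro x hx; simp [h0 x hx]
    · exact fun x _ => (hgd x).differentiableAt
    · exact fun x _ => (hFi i).differentiable one_ne_zero x
  calc ∫ x, g x * ediv F x
      = ∫ x, ∑ i, g x * fderiv ℝ F x (EuclideanSpace.single i 1) i := by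
        unfold ediv; simp_rw [Finset.mul_sum]
    _ = ∑ i, ∫ x, g x * fderiv ℝ F x (EuclideanSpace.single i 1) i := by
        apply integral_finset_sum
        intro i _
        apply hInt _ ?_ ?_
        · exact (hgc.mul (((continuous_apply i).comp (PiLp.continuous_ofLp 2 _)).comp
            (hF'.clm_apply continuous_const)))
        · intro x hx; simp [hFzero x hx]
    _ = ∑ i, - ∫ x, (x : EuclideanSpace ℝ (Fin d)) i * F x i := by
        exact Finset.sum_congr rfl fun i _ => key i
    _ = - ∑ i, ∫ x, (x : EuclideanSpace ℝ (Fin d)) i * F x i := by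
        rw [← Finset.sum_neg_distrib]
    _ = - ∫ x, ∑ i, (x : EuclideanSpace ℝ (Fin d)) i * F x i := by
        congr 1
        refine (integral_finset_sum _ fun i _ => ?_).symm
        apply hInt _ ?_ ?_
        · exact ((continuous_apply i).comp (PiLp.continuous_ofLp 2 _)).mul
            ((continuous_apply i).comp ((PiLp.continuous_ofLp 2 _).comp hFc))
        · intro x hx; simp [h0 x hx]
    _ = - ∫ x, (inner ℝ x (F x) : ℝ) := by
        congr 1
        refine integral_congr_ae (Filter.Eventually.of_forall fun x => ?_)
        simp only [PiLp.inner_apply, RCLike.inner_apply, conj_trivial]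
        exact Finset.sum_congr rfl fun i _ => by ring

lemma my_int_supp {d : ℕ} {K : Set (EuclideanSpace ℝ (Fin d))} (hK : IsCompact K)
    {f : EuclideanSpace ℝ (Fin d) → ℝ} (hc : Continuous f) (hs : ∀ x ∉ K, f x = 0) :
    Integrable f := hc.integrable_of_hasCompactSupport (HasCompactSupport.intro hK hs)

lemma my_grad_contDiff {d : ℕ} {f : EuclideanSpace ℝ (Fin d) → ℝ} (hf : ContDiff ℝ 2 f) :
    ContDiff ℝ 1 (gradient f) := by
  have : gradient f = fun x => (InnerProductSpace.toDual ℝ (EuclideanSpace ℝ (Fin d))).symm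
      (fderiv ℝ f x) := rfl
  rw [this]
  exact ((InnerProductSpace.toDual ℝ (EuclideanSpace ℝ (Fin d))).symm.contDiff).comp
    (hf.fderiv_right (by norm_num))

lemma my_continuous_ediv {d : ℕ} {F : EuclideanSpace ℝ (Fin d) → EuclideanSpace ℝ (Fin d)}
    (hF : ContDiff ℝ 1 F) : Continuous (ediv F) := by
  unfold ediv
  refine continuous_finset_sum _ fun i _ => ?_
  exact ((continuous_apply i).comp (PiLp.continuous_ofLp 2 _)).comp
    ((hF.continuous_fderiv one_ne_zero).clm_apply continuous_const)

lemma my_ediv_zero {d : ℕ} {K : Set (EuclideanSpace ℝ (Fin d))} (hKc : IsClosed K)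
    {F : EuclideanSpace ℝ (Fin d) → EuclideanSpace ℝ (Fin d)}
    (h0 : ∀ x ∉ K, F x = 0) : ∀ x ∉ K, ediv F x = 0 := by
  intro x hx
  have hev : F =ᶠ[nhds x] (fun _ => 0) :=
    Filter.eventually_of_mem (hKc.isOpen_compl.mem_nhds hx) h0
  unfold ediv
  rw [hev.fderiv_eq, fderiv_fun_const]
  simp

set_option maxHeartbeats 1000000 in
/-- Second-moment differential inequality (Step 3 of Proposition 1): for a
compactly supported classical solution with `ψ ≥ 0`, `0 ≤ φ ≤ 1`, the second
moment `M(t) = ∫ (|x|²/2)ψ(t)` is differentiable on `(0,T)` with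
`M' ≤ ∫ (|x|²/2)ψφ(1-φ) + (1/2)∫ ψφ(1-φ)|α∇φ - D∇ψ|² + R₀∫ (|x|²/2)ψ`. -/
theorem stmt_6 (d : ℕ) (hd : d = 1 ∨ d = 2 ∨ d = 3) (T γ α D R₀ : ℝ)
    (hT : 0 < T) (hγ : 0 < γ) (hα : 0 < α) (hD : 0 < D) (hR : 0 < R₀)
    (ψ φ : ℝ × EuclideanSpace ℝ (Fin d) → ℝ)
    (hψC2 : ContDiffOn ℝ 2 ψ (Set.Icc 0 T ×ˢ Set.univ))
    (hφC2 : ContDiffOn ℝ 2 φ (Set.Icc 0 T ×ˢ Set.univ))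
    (hψnn : ∀ t ∈ Set.Icc (0 : ℝ) T, ∀ x, 0 ≤ ψ (t, x))
    (hφ01 : ∀ t ∈ Set.Icc (0 : ℝ) T, ∀ x, 0 ≤ φ (t, x) ∧ φ (t, x) ≤ 1)
    (K : Set (EuclideanSpace ℝ (Fin d))) (hK : IsCompact K)
    (hsupp : ∀ t ∈ Set.Icc (0 : ℝ) T, (Function.support fun x => ψ (t, x)) ⊆ K)
    (hpde : ∀ t ∈ Set.Ioo (0 : ℝ) T, ∀ x,
      deriv (fun s => ψ (s, x)) t +
        ediv (fun y => (ψ (t, y) * (φ (t, y) * (1 - φ (t, y)))) •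
          (α • gradient (fun z => φ (t, z)) y - D • gradient (fun z => ψ (t, z)) y)) x
        = R₀ * ψ (t, x) * (1 - φ (t, x) - ψ (t, x)))
    (M : ℝ → ℝ) (hM : ∀ τ, M τ = ∫ x, ‖x‖ ^ 2 / 2 * ψ (τ, x)) :
    ∀ t ∈ Set.Ioo (0 : ℝ) T,
      DifferentiableAt ℝ M t ∧
      deriv M t ≤
        (∫ x, ‖x‖ ^ 2 / 2 * (ψ (t, x) * (φ (t, x) * (1 - φ (t, x))))) +
        1 / 2 * (∫ x, ψ (t, x) * (φ (t, x) * (1 - φ (t, x))) *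
          ‖α • gradient (fun z => φ (t, z)) x - D • gradient (fun z => ψ (t, z)) x‖ ^ 2) +
        R₀ * ∫ x, ‖x‖ ^ 2 / 2 * ψ (t, x) := by
  intro t ht
  have hKc : IsClosed K := hK.isClosed
  set Ω : Set (ℝ × EuclideanSpace ℝ (Fin d)) := Set.Ioo 0 T ×ˢ Set.univ with hΩdef
  have hΩ : IsOpen Ω := isOpen_Ioo.prod isOpen_univ
  have hΩsub : Ω ⊆ Set.Icc 0 T ×ˢ Set.univ :=
    Set.prod_mono Set.Ioo_subset_Icc_self le_rfl
  have hψΩ : ContDiffOn ℝ 2 ψ Ω := hψC2.mono hΩsub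
  have hφΩ : ContDiffOn ℝ 2 φ Ω := hφC2.mono hΩsub
  have hmem : ∀ τ ∈ Set.Ioo (0:ℝ) T, ∀ x : EuclideanSpace ℝ (Fin d), (τ, x) ∈ Ω :=
    fun τ hτ x => ⟨hτ, Set.mem_univ x⟩
  -- time slices are C²
  have hslice : ∀ ⦃f : ℝ × EuclideanSpace ℝ (Fin d) → ℝ⦄, ContDiffOn ℝ 2 f Ω →
      ∀ τ ∈ Set.Ioo (0:ℝ) T, ContDiff ℝ 2 (fun x => f (τ, x)) := by
    intro f hf τ hτ
    refine contDiff_iff_contDiffAt.2 fun x => ?_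
    exact (hf.contDiffAt (hΩ.mem_nhds (hmem τ hτ x))).comp x
      ((contDiff_const.prodMk contDiff_id).contDiffAt)
  have hψs : ∀ τ ∈ Set.Ioo (0:ℝ) T, ContDiff ℝ 2 (fun x => ψ (τ, x)) := hslice hψΩ
  have hφs : ∀ τ ∈ Set.Ioo (0:ℝ) T, ContDiff ℝ 2 (fun x => φ (τ, x)) := hslice hφΩ
  -- support of ψ slices
  have hψ0 : ∀ τ ∈ Set.Icc (0:ℝ) T, ∀ x ∉ K, ψ (τ, x) = 0 := by
    intro τ hτ x hx
    by_contra h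
    exact hx (hsupp τ hτ h)
  -- the vector field at time t
  set Fv : EuclideanSpace ℝ (Fin d) → EuclideanSpace ℝ (Fin d) :=
    fun y => (ψ (t, y) * (φ (t, y) * (1 - φ (t, y)))) •
      (α • gradient (fun z => φ (t, z)) y - D • gradient (fun z => ψ (t, z)) y) with hFvdef
  have htIcc : t ∈ Set.Icc (0:ℝ) T := Set.Ioo_subset_Icc_self ht
  have hFvC1 : ContDiff ℝ 1 Fv := by
    refine ContDiff.smul (f := fun y => ψ (t, y) * (φ (t, y) * (1 - φ (t, y))))
      (g := fun y => α • gradient (fun z => φ (t, z)) y - D • gradient (fun z => ψ (t, z)) y) ?_ ?_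
    · exact (((hψs t ht).of_le (by norm_num)).mul
        (((hφs t ht).of_le (by norm_num)).mul (contDiff_const.sub ((hφs t ht).of_le (by norm_num)))))
    · exact ((my_grad_contDiff (hφs t ht)).const_smul α).sub
        ((my_grad_contDiff (hψs t ht)).const_smul D)
  have hFv0 : ∀ x ∉ K, Fv x = 0 := by
    intro x hx
    simp [hFvdef, hψ0 t htIcc x hx]
  -- time derivative function
  set pd : ℝ × EuclideanSpace ℝ (Fin d) → ℝ := fun p => fderiv ℝ ψ p (1, 0) with hpddef
  have hpdcont : ContinuousOn pd Ω :=
    (hψΩ.continuousOn_fderiv_of_isOpen hΩ (by norm_num)).clm_apply continuousOn_const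
  have hderiv : ∀ τ ∈ Set.Ioo (0:ℝ) T, ∀ x, HasDerivAt (fun s => ψ (s, x)) (pd (τ, x)) τ := by
    intro τ hτ x
    have h1 : HasFDerivAt ψ (fderiv ℝ ψ (τ, x)) (τ, x) :=
      (((hψΩ.contDiffAt (hΩ.mem_nhds (hmem τ hτ x))).differentiableAt
        (by norm_num))).hasFDerivAt
    have h2 : HasDerivAt (fun s : ℝ => (s, x)) ((1:ℝ), (0 : EuclideanSpace ℝ (Fin d))) τ :=
      (hasDerivAt_id τ).prodMk (hasDerivAt_const τ x)
    exact h1.comp_hasDerivAt τ h2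
  -- pd vanishes off K
  have hpd0 : ∀ τ ∈ Set.Ioo (0:ℝ) T, ∀ x ∉ K, pd (τ, x) = 0 := by
    intro τ hτ x hx
    have hev : ψ =ᶠ[nhds (τ, x)] (fun _ => 0) := by
      refine Filter.eventually_of_mem ((hΩ.inter (isOpen_univ.prod hKc.isOpen_compl)).mem_nhds
        ⟨hmem τ hτ x, ⟨Set.mem_univ _, hx⟩⟩) ?_
      rintro ⟨s, y⟩ ⟨⟨hs, -⟩, ⟨-, hy⟩⟩
      exact hψ0 s (Set.Ioo_subset_Icc_self hs) y hy
    simp only [hpddef]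
    rw [hev.fderiv_eq, fderiv_fun_const]
    rfl
  set g : EuclideanSpace ℝ (Fin d) → ℝ := fun x => ‖x‖ ^ 2 / 2 with hgdef
  have hgc : Continuous g := (continuous_norm.pow 2).div_const 2
  have hgnn : ∀ x, 0 ≤ g x := fun x => by positivity
  -- choose ε with closedBall t ε ⊆ Ioo 0 T
  obtain ⟨ε, hε, hball⟩ : ∃ ε > 0, Metric.closedBall t ε ⊆ Set.Ioo 0 T :=
    (Metric.nhds_basis_closedBall.mem_iff).1 (isOpen_Ioo.mem_nhds ht)
  -- uniform bound for pd on closedBall t ε ×ˢ K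
  obtain ⟨C, hC⟩ : ∃ C : ℝ, ∀ p ∈ Metric.closedBall t ε ×ˢ K, ‖pd p‖ ≤ C := by
    refine ((isCompact_closedBall t ε).prod hK).exists_bound_of_continuousOn
      (hpdcont.mono ?_)
    exact Set.prod_mono hball (Set.subset_univ K)
  set bound : EuclideanSpace ℝ (Fin d) → ℝ := K.indicator (fun x => g x * C) with hbdef
  have hslicecont : ∀ τ ∈ Set.Ioo (0:ℝ) T, Continuous (fun x => ψ (τ, x)) :=
    fun τ hτ => (hψs τ hτ).continuous
  have hmain := hasDerivAt_integral_of_dominated_loc_of_deriv_le (μ := volume)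
    (F := fun τ x => g x * ψ (τ, x)) (F' := fun τ x => g x * pd (τ, x))
    (x₀ := t) (bound := bound) (Metric.ball_mem_nhds t hε)
    (by -- hF_meas
      filter_upwards [isOpen_Ioo.mem_nhds ht] with τ hτ
      exact (hgc.mul (hslicecont τ hτ)).aestronglyMeasurable)
    (by -- hF_int
      refine my_int_supp hK (hgc.mul (hslicecont t ht)) ?_
      intro x hx; simp [hψ0 t htIcc x hx])
    (by -- hF'_meas
      have : Continuous (fun x => pd (t, x)) := by
        refine hpdcont.comp_continuous (continuous_const.prodMk continuous_id) ?_
        exact fun x => hmem t ht x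
      exact (hgc.mul this).aestronglyMeasurable)
    (by -- h_bound
      filter_upwards with x τ hτ
      by_cases hx : x ∈ K
      · have hτ' : τ ∈ Metric.closedBall t ε := Metric.ball_subset_closedBall hτ
        have h1 : ‖pd (τ, x)‖ ≤ C := hC (τ, x) ⟨hτ', hx⟩
        have : bound x = g x * C := by rw [hbdef, Set.indicator_of_mem hx]
        rw [this]
        calc ‖g x * pd (τ, x)‖ = g x * ‖pd (τ, x)‖ := by
              rw [norm_mul, Real.norm_of_nonneg (hgnn x)]
          _ ≤ g x * C := mul_le_mul_of_nonneg_left h1 (hgnn x)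
      · have : bound x = 0 := by rw [hbdef, Set.indicator_of_notMem hx]
        rw [this, hpd0 τ (hball (Metric.ball_subset_closedBall hτ)) x hx]
        simp)
    (by -- bound integrable
      rw [hbdef, integrable_indicator_iff hK.measurableSet]
      exact (hgc.mul continuous_const).continuousOn.integrableOn_compact hK)
    (by -- h_diff
      filter_upwards with x τ hτ
      exact (hderiv τ (hball (Metric.ball_subset_closedBall hτ)) x).const_mul (g x))
  have hMfun : M = fun τ => ∫ x, g x * ψ (τ, x) := funext hM
  have hMderiv : HasDerivAt M (∫ x, g x * pd (t, x)) t := by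
    rw [hMfun]; exact hmain.2
  refine ⟨hMderiv.differentiableAt, ?_⟩
  rw [hMderiv.deriv]
  -- auxiliary functions
  set w : EuclideanSpace ℝ (Fin d) → EuclideanSpace ℝ (Fin d) :=
    fun x => α • gradient (fun z => φ (t, z)) x - D • gradient (fun z => ψ (t, z)) x with hwdef
  set c : EuclideanSpace ℝ (Fin d) → ℝ :=
    fun x => ψ (t, x) * (φ (t, x) * (1 - φ (t, x))) with hcdef
  have hwcont : Continuous w := by
    refine Continuous.sub ?_ ?_
    · exact (my_grad_contDiff (hφs t ht)).continuous.const_smul α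
    · exact (my_grad_contDiff (hψs t ht)).continuous.const_smul D
  have hccont : Continuous c := by
    refine Continuous.mul (hψs t ht).continuous (Continuous.mul (hφs t ht).continuous ?_)
    exact continuous_const.sub (hφs t ht).continuous
  have hFveq : ∀ x, Fv x = c x • w x := fun x => rfl
  have hFvcont : Continuous Fv := hFvC1.continuous
  -- pointwise identity for pd at time t
  have hpdeq : ∀ x, pd (t, x)
      = R₀ * ψ (t, x) * (1 - φ (t, x) - ψ (t, x)) - ediv Fv x := by
    intro x
    have h := hpde t ht x
    rw [(hderiv t ht x).deriv] at h
    rw [show (fun y => (ψ (t, y) * (φ (t, y) * (1 - φ (t, y)))) •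
        (α • gradient (fun z => φ (t, z)) y - D • gradient (fun z => ψ (t, z)) y)) = Fv from rfl]
      at h
    linarith
  -- integrability facts
  have hintA : Integrable (fun x => g x * (R₀ * ψ (t, x) * (1 - φ (t, x) - ψ (t, x)))) := by
    refine my_int_supp hK ?_ ?_
    · refine hgc.mul (Continuous.mul (continuous_const.mul (hψs t ht).continuous) ?_)
      exact (continuous_const.sub (hφs t ht).continuous).sub (hψs t ht).continuous
    · intro x hx; simp [hψ0 t htIcc x hx]
  have hintdiv : Integrable (fun x => g x * ediv Fv x) := by
    refine my_int_supp hK (hgc.mul (my_continuous_ediv hFvC1)) ?_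
    intro x hx; rw [my_ediv_zero hKc hFv0 x hx, mul_zero]
  have hintinner : Integrable (fun x => (inner ℝ x (Fv x) : ℝ)) := by
    refine my_int_supp hK (continuous_id.inner hFvcont) ?_
    intro x hx; rw [hFv0 x hx]; simp
  have hI1 : Integrable (fun x => g x * c x) := by
    refine my_int_supp hK (hgc.mul hccont) ?_
    intro x hx; simp [hcdef, hψ0 t htIcc x hx]
  have hI2 : Integrable (fun x => c x * ‖w x‖ ^ 2) := by
    refine my_int_supp hK (hccont.mul ((hwcont.norm).pow 2)) ?_
    intro x hx; simp [hcdef, hψ0 t htIcc x hx]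
  have hI3 : Integrable (fun x => g x * ψ (t, x)) := by
    refine my_int_supp hK (hgc.mul (hψs t ht).continuous) ?_
    intro x hx; simp [hψ0 t htIcc x hx]
  -- rewrite the integral
  have h1 : (fun x => g x * pd (t, x))
      = fun x => g x * (R₀ * ψ (t, x) * (1 - φ (t, x) - ψ (t, x))) - g x * ediv Fv x := by
    funext x; rw [hpdeq x]; ring
  rw [h1, integral_sub hintA hintdiv, my_ibp Fv K hK hFvC1 hFv0, sub_neg_eq_add,
    ← integral_add hintA hintinner]
  -- pointwise bound
  have hptwise : ∀ x, g x * (R₀ * ψ (t, x) * (1 - φ (t, x) - ψ (t, x)))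
        + (inner ℝ x (Fv x) : ℝ)
      ≤ g x * c x + 1 / 2 * (c x * ‖w x‖ ^ 2) + R₀ * (g x * ψ (t, x)) := by
    intro x
    have ha : 0 ≤ ψ (t, x) := hψnn t htIcc x
    have hb0 : 0 ≤ φ (t, x) := (hφ01 t htIcc x).1
    have hb1 : φ (t, x) ≤ 1 := (hφ01 t htIcc x).2
    have hcx : 0 ≤ c x := by
      rw [hcdef]
      exact mul_nonneg ha (mul_nonneg hb0 (by linarith))
    have hinner1 : (inner ℝ x (Fv x) : ℝ) = c x * (inner ℝ x (w x) : ℝ) := by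
      rw [hFveq x, real_inner_smul_right]
    have hip : (inner ℝ x (w x) : ℝ) ≤ ‖x‖ * ‖w x‖ := real_inner_le_norm x (w x)
    have hcip : c x * (inner ℝ x (w x) : ℝ) ≤ c x * (‖x‖ * ‖w x‖) :=
      mul_le_mul_of_nonneg_left hip hcx
    have hgx : g x = ‖x‖ ^ 2 / 2 := rfl
    have hnx : 0 ≤ ‖x‖ := norm_nonneg x
    have hnw : 0 ≤ ‖w x‖ := norm_nonneg (w x)
    have hc' : c x = ψ (t, x) * (φ (t, x) * (1 - φ (t, x))) := rfl
    rw [hinner1, hgx, hc']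
    rw [hc'] at hcx hcip
    nlinarith [hcip, hcx, hip, mul_nonneg hcx (sq_nonneg (‖x‖ - ‖w x‖)), sq_nonneg (‖x‖),
      mul_nonneg (mul_nonneg hR.le (sq_nonneg ‖x‖))
        (mul_nonneg ha (by linarith : (0:ℝ) ≤ φ (t, x) + ψ (t, x)))]
  have hle : ∫ x, (g x * (R₀ * ψ (t, x) * (1 - φ (t, x) - ψ (t, x))) + (inner ℝ x (Fv x) : ℝ))
      ≤ ∫ x, (g x * c x + 1 / 2 * (c x * ‖w x‖ ^ 2) + R₀ * (g x * ψ (t, x))) := by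
    refine integral_mono (hintA.add hintinner) ?_ fun x => hptwise x
    exact (hI1.add (hI2.const_mul (1/2))).add (hI3.const_mul R₀)
  refine hle.trans (le_of_eq ?_)
  have hq2 : Integrable (fun x => 1 / 2 * (c x * ‖w x‖ ^ 2)) := hI2.const_mul (1/2)
  have hq3 : Integrable (fun x => R₀ * (g x * ψ (t, x))) := hI3.const_mul R₀
  have hsum2 : Integrable (fun x => g x * c x + 1 / 2 * (c x * ‖w x‖ ^ 2)) := hI1.add hq2
  rw [integral_add hsum2 hq3, integral_add hI1 hq2]
  have e1 : ∫ (a : EuclideanSpace ℝ (Fin d)), g a * c a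
      = ∫ x, ‖x‖ ^ 2 / 2 * (ψ (t, x) * (φ (t, x) * (1 - φ (t, x)))) := rfl
  have e2 : ∫ (a : EuclideanSpace ℝ (Fin d)), 1 / 2 * (c a * ‖w a‖ ^ 2)
      = 1 / 2 * ∫ x, ψ (t, x) * (φ (t, x) * (1 - φ (t, x))) *
          ‖α • gradient (fun z => φ (t, z)) x - D • gradient (fun z => ψ (t, z)) x‖ ^ 2 := by
    rw [integral_const_mul]
  have e3 : ∫ (a : EuclideanSpace ℝ (Fin d)), R₀ * (g a * ψ (t, a))
      = R₀ * ∫ x, ‖x‖ ^ 2 / 2 * ψ (t, x) := by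
    rw [integral_const_mul]
  rw [e1, e2, e3]
end

section
/- Let d ≥ 1, γ > 0, let U ⊆ ℝ × ℝᵈ be open and let φ, ψ : U → ℝ be C² functions satisfying ∂_t φ = -γ φ ψ on U. Then at every point of U, ∂_t[(1-φ)|∇_x φ|²/2] = -γ(1 - (3/2)φ) ψ |∇_x φ|² - γ(1-φ) φ ∇_x φ · ∇_x ψ. In particular, if in addition ψ ≥ 0 and φ ≤ 2/3 on U, then ∂_t[(1-φ)|∇_x φ|²/2] ≤ -γ(1-φ) φ ∇_x φ · ∇_x ψ at every point of U. -/
open scoped RealInnerProductSpace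

abbrev EE (d : ℕ) := EuclideanSpace ℝ (Fin d)

set_option maxHeartbeats 2000000 in
/-- Pointwise identity and inequality of Step 1 of Proposition 2: if
`∂ₜφ = -γφψ` on an open set `U ⊆ ℝ × ℝᵈ`, then
`∂ₜ[(1-φ)|∇φ|²/2] = -γ(1 - (3/2)φ)ψ|∇φ|² - γ(1-φ)φ ∇φ·∇ψ`; moreover if
`ψ ≥ 0` and `φ ≤ 2/3` on `U`, the right-hand side is `≤ -γ(1-φ)φ ∇φ·∇ψ`. -/
theorem stmt_9 (d : ℕ) (hd : 1 ≤ d) (γ : ℝ) (hγ : 0 < γ)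
    (U : Set (ℝ × EuclideanSpace ℝ (Fin d))) (hU : IsOpen U)
    (φ ψ : ℝ × EuclideanSpace ℝ (Fin d) → ℝ)
    (hφC2 : ContDiffOn ℝ 2 φ U) (hψC2 : ContDiffOn ℝ 2 ψ U)
    (hpde : ∀ p ∈ U, HasDerivAt (fun s => φ (s, p.2)) (-γ * φ p * ψ p) p.1) :
    (∀ p ∈ U, HasDerivAt
        (fun s => (1 - φ (s, p.2)) * ‖gradient (fun y => φ (s, y)) p.2‖ ^ 2 / 2)
        (-γ * (1 - 3 / 2 * φ p) * ψ p * ‖gradient (fun y => φ (p.1, y)) p.2‖ ^ 2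
          - γ * (1 - φ p) * φ p *
            ⟪gradient (fun y => φ (p.1, y)) p.2, gradient (fun y => ψ (p.1, y)) p.2⟫)
        p.1) ∧
    ((∀ p ∈ U, 0 ≤ ψ p) → (∀ p ∈ U, φ p ≤ 2 / 3) → ∀ p ∈ U,
      -γ * (1 - 3 / 2 * φ p) * ψ p * ‖gradient (fun y => φ (p.1, y)) p.2‖ ^ 2
        - γ * (1 - φ p) * φ p *
          ⟪gradient (fun y => φ (p.1, y)) p.2, gradient (fun y => ψ (p.1, y)) p.2⟫
      ≤ -γ * (1 - φ p) * φ p *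
          ⟪gradient (fun y => φ (p.1, y)) p.2, gradient (fun y => ψ (p.1, y)) p.2⟫) := by
  constructor
  · rintro ⟨t₀, x₀⟩ hp
    -- differentiability facts
    have hφd : ∀ q ∈ U, DifferentiableAt ℝ φ q := fun q hq =>
      (hφC2.contDiffAt (hU.mem_nhds hq)).differentiableAt (by norm_num)
    have hψd : ∀ q ∈ U, DifferentiableAt ℝ ψ q := fun q hq =>
      (hψC2.contDiffAt (hU.mem_nhds hq)).differentiableAt (by norm_num)
    have hφat : ContDiffAt ℝ 2 φ (t₀, x₀) := hφC2.contDiffAt (hU.mem_nhds hp)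
    -- second derivative of φ
    set f'' := fderiv ℝ (fderiv ℝ φ) (t₀, x₀) with hf''
    have hC1 : ContDiffAt ℝ 1 (fderiv ℝ φ) (t₀, x₀) := hφat.fderiv_right (by norm_num)
    have hA0 : HasFDerivAt (fderiv ℝ φ) f'' (t₀, x₀) :=
      (hC1.differentiableAt (by norm_num)).hasFDerivAt
    -- symmetry of second derivative
    have hsymm : ∀ v w, f'' v w = f'' w v := hφat.isSymmSndFDerivAt (by simp [minSmoothness_of_isRCLikeNormedField])
    -- the vector field g s := gradient of φ(s,·) expressed via fderiv
    set inrE := ContinuousLinearMap.inr ℝ ℝ (EE d) with hinrE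
    set g : ℝ → EE d := fun s =>
      (InnerProductSpace.toDual ℝ (EE d)).symm ((fderiv ℝ φ (s, x₀)).comp inrE) with hgdef
    have hev : ∀ᶠ s in nhds t₀, (s, x₀) ∈ U := by
      have : ContinuousAt (fun s : ℝ => (s, x₀)) t₀ :=
        (continuous_id.prodMk continuous_const).continuousAt
      exact this.preimage_mem_nhds (hU.mem_nhds hp)
    -- partial fderiv in y equals composition with inr
    have hpart : ∀ (χ : ℝ × EE d → ℝ) (s : ℝ), (s, x₀) ∈ U → DifferentiableAt ℝ χ (s, x₀) →
        HasFDerivAt (fun y => χ (s, y)) ((fderiv ℝ χ (s, x₀)).comp inrE) x₀ := by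
      intro χ s hs hdiff
      exact hdiff.hasFDerivAt.comp x₀ (hasFDerivAt_prodMk_right s x₀)
    have hgrad : ∀ s, (s, x₀) ∈ U →
        gradient (fun y => φ (s, y)) x₀ = g s := by
      intro s hs
      have h := (hpart φ s hs (hφd _ hs)).fderiv
      simp only [gradient, h, hgdef]
    -- derivative of s ↦ fderiv φ (s, x₀)
    have hA : HasDerivAt (fun s => fderiv ℝ φ (s, x₀)) (f'' (1, 0)) t₀ :=
      hA0.comp_hasDerivAt t₀ ((hasDerivAt_id t₀).prodMk (hasDerivAt_const t₀ x₀))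
    -- derivative of s ↦ (fderiv φ (s, x₀)).comp inrE
    have hB : HasDerivAt (fun s => (fderiv ℝ φ (s, x₀)).comp inrE)
        ((f'' (1, 0)).comp inrE) t₀ := by
      have hlin : HasFDerivAt
          (fun L : (ℝ × EE d) →L[ℝ] ℝ => L.comp inrE)
          ((ContinuousLinearMap.compL ℝ (EE d) (ℝ × EE d) ℝ).flip inrE)
          (fderiv ℝ φ (t₀, x₀)) :=
        ((ContinuousLinearMap.compL ℝ (EE d) (ℝ × EE d) ℝ).flip inrE).hasFDerivAt
      exact hlin.comp_hasDerivAt t₀ hA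
    -- derivative of g
    set w : EE d := (InnerProductSpace.toDual ℝ (EE d)).symm ((f'' (1, 0)).comp inrE) with hwdef
    have hC : HasDerivAt g w t₀ := by
      rw [hasDerivAt_iff_isLittleO] at hB ⊢
      rw [Asymptotics.isLittleO_iff] at hB ⊢
      intro c hc
      filter_upwards [hB hc] with s hs
      have hnorm : ‖g s - g t₀ - (s - t₀) • w‖ =
          ‖(fderiv ℝ φ (s, x₀)).comp inrE - (fderiv ℝ φ (t₀, x₀)).comp inrE -
            (s - t₀) • (f'' (1, 0)).comp inrE‖ := by
        have hsm : (InnerProductSpace.toDual ℝ (EE d)).symm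
            ((fderiv ℝ φ (s, x₀)).comp inrE - (fderiv ℝ φ (t₀, x₀)).comp inrE -
              (s - t₀) • (f'' (1, 0)).comp inrE) = g s - g t₀ - (s - t₀) • w := by
          rw [LinearIsometryEquiv.map_sub, LinearIsometryEquiv.map_sub, map_smulₛₗ]
          simp [hgdef, hwdef]
        rw [← hsm, LinearIsometryEquiv.norm_map]
      rw [hnorm]
      exact hs
    -- compute the mixed second derivative via the PDE
    set T := ContinuousLinearMap.apply ℝ ℝ (((1 : ℝ), (0 : EE d)) : ℝ × EE d) with hT
    have hTd : HasFDerivAt (fun q => fderiv ℝ φ q ((1 : ℝ), (0 : EE d)))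
        (T.comp f'') (t₀, x₀) :=
      T.hasFDerivAt.comp (t₀, x₀) hA0
    have heq : (fun q : ℝ × EE d => fderiv ℝ φ q ((1 : ℝ), (0 : EE d)))
        =ᶠ[nhds (t₀, x₀)] fun q => -γ * φ q * ψ q := by
      filter_upwards [hU.mem_nhds hp] with q hq
      have h1 : HasDerivAt (fun s => φ (s, q.2)) (-γ * φ q * ψ q) q.1 := hpde q hq
      have h2 : HasDerivAt (fun s => φ (s, q.2)) (fderiv ℝ φ q ((1 : ℝ), (0 : EE d))) q.1 := by
        have := (hφd q hq).hasFDerivAt.comp_hasDerivAt q.1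
          ((hasDerivAt_id q.1).prodMk (hasDerivAt_const q.1 q.2))
        exact this
      exact h2.unique h1
    have hTd' : HasFDerivAt (fun q : ℝ × EE d => -γ * φ q * ψ q) (T.comp f'') (t₀, x₀) :=
      hTd.congr_of_eventuallyEq heq.symm
    have hprod : HasFDerivAt (fun q : ℝ × EE d => -γ * φ q * ψ q)
        ((-γ * φ (t₀, x₀)) • fderiv ℝ ψ (t₀, x₀) +
          (ψ (t₀, x₀)) • ((-γ) • fderiv ℝ φ (t₀, x₀))) (t₀, x₀) := by
      have hc : HasFDerivAt (fun q : ℝ × EE d => -γ * φ q)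
          ((-γ) • fderiv ℝ φ (t₀, x₀)) (t₀, x₀) :=
        (hφd _ hp).hasFDerivAt.const_mul (-γ)
      exact hc.mul (hψd _ hp).hasFDerivAt
    have hkey : T.comp f'' = (-γ * φ (t₀, x₀)) • fderiv ℝ ψ (t₀, x₀) +
        (ψ (t₀, x₀)) • ((-γ) • fderiv ℝ φ (t₀, x₀)) := hTd'.unique hprod
    -- the gradients appearing in the statement
    set gφ : EE d := gradient (fun y => φ (t₀, y)) x₀ with hgφ
    set gψ : EE d := gradient (fun y => ψ (t₀, y)) x₀ with hgψ
    have hgφ' : gφ = g t₀ := hgrad t₀ hp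
    have hgψfd : fderiv ℝ (fun y => ψ (t₀, y)) x₀ = (fderiv ℝ ψ (t₀, x₀)).comp inrE :=
      (hpart ψ t₀ hp (hψd _ hp)).fderiv
    have hgφfd : fderiv ℝ (fun y => φ (t₀, y)) x₀ = (fderiv ℝ φ (t₀, x₀)).comp inrE :=
      (hpart φ t₀ hp (hφd _ hp)).fderiv
    -- inner products with w
    have hwip : ∀ v : EE d, ⟪w, v⟫ =
        -γ * φ (t₀, x₀) * ⟪gψ, v⟫ + ψ (t₀, x₀) * (-γ * ⟪gφ, v⟫) := by
      intro v
      have h1 : ⟪w, v⟫ = f'' (1, 0) (inrE v) := by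
        rw [hwdef, InnerProductSpace.toDual_symm_apply]
        rfl
      have h2 : f'' (1, 0) (inrE v) = f'' (inrE v) (1, 0) := hsymm _ _
      have h3 : f'' (inrE v) (1, 0) = (T.comp f'') (inrE v) := rfl
      have h4 : ⟪gφ, v⟫ = fderiv ℝ φ (t₀, x₀) (inrE v) := by
        rw [hgφ, gradient, InnerProductSpace.toDual_symm_apply, hgφfd]
        rfl
      have h5 : ⟪gψ, v⟫ = fderiv ℝ ψ (t₀, x₀) (inrE v) := by
        rw [hgψ, gradient, InnerProductSpace.toDual_symm_apply, hgψfd]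
        rfl
      rw [h1, h2, h3, hkey, h4, h5]
      simp
    -- derivative of the inner product ⟪g s, g s⟫
    have hN : HasDerivAt (fun s => ⟪g s, g s⟫) (⟪g t₀, w⟫ + ⟪w, g t₀⟫) t₀ :=
      hC.inner ℝ hC
    -- derivative of 1 - φ(s, x₀)
    have ha : HasDerivAt (fun s => 1 - φ (s, x₀)) (-(-γ * φ (t₀, x₀) * ψ (t₀, x₀))) t₀ := by
      have h := (hasDerivAt_const t₀ (1 : ℝ)).sub (hpde (t₀, x₀) hp)
      rw [zero_sub] at h
      exact h
    have hmul := (ha.mul hN).div_const 2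
    -- transfer to the statement's function
    have hfun : (fun s => (1 - φ (s, x₀)) * ‖gradient (fun y => φ (s, y)) x₀‖ ^ 2 / 2)
        =ᶠ[nhds t₀] fun s => (1 - φ (s, x₀)) * ⟪g s, g s⟫ / 2 := by
      filter_upwards [hev] with s hs
      rw [hgrad s hs, real_inner_self_eq_norm_sq]
    have hfinal := hmul.congr_of_eventuallyEq hfun
    refine hfinal.congr_deriv ?_
    -- scalar identity
    have hww : ⟪w, g t₀⟫ = -γ * φ (t₀, x₀) * ⟪gψ, g t₀⟫ + ψ (t₀, x₀) * (-γ * ⟪gφ, g t₀⟫) :=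
      hwip (g t₀)
    have hsym1 : ⟪g t₀, w⟫ = ⟪w, g t₀⟫ := real_inner_comm _ _
    have hsq : ⟪gφ, g t₀⟫ = ‖gφ‖ ^ 2 := by rw [← hgφ']; exact real_inner_self_eq_norm_sq _
    have hpsi : ⟪gψ, g t₀⟫ = ⟪gφ, gψ⟫ := by rw [← hgφ']; exact real_inner_comm _ _
    have hgg : ⟪g t₀, g t₀⟫ = ‖gφ‖ ^ 2 := by rw [← hgφ']; exact real_inner_self_eq_norm_sq _
    rw [hsym1, hww, hsq, hpsi, hgg]
    ring
  · intro hψ0 hφle p hp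
    set N : ℝ := ‖gradient (fun y => φ (p.1, y)) p.2‖ with hN
    set Q : ℝ := ⟪gradient (fun y => φ (p.1, y)) p.2, gradient (fun y => ψ (p.1, y)) p.2⟫
      with hQ
    have h1 : 0 ≤ γ * (1 - 3 / 2 * φ p) * ψ p * N ^ 2 :=
      mul_nonneg (mul_nonneg (mul_nonneg hγ.le (by linarith [hφle p hp])) (hψ0 p hp))
        (sq_nonneg N)
    linarith
end

section
/- Let d ∈ {1,2,3}, T > 0 and let γ, α, D, R₀ > 0 and δ > 0. Let ψ, φ : [0,T] × ℝᵈ → ℝ be C² functions with ψ ≥ 0 and 0 ≤ φ ≤ 1, with ψ(t,·) supported in a fixed compact set K ⊂ ℝᵈ for all t ∈ [0,T], satisfying on (0,T) × ℝᵈ the perturbed system ∂_t ψ + ∇_x·[ψ (δ + φ(1-φ))(α∇_x φ - D∇_x ψ)] = R₀ ψ(1-φ-ψ) and ∂_t φ = -γ φ ψ. Set C₂ = (2/D)(D R₀ + α R₀ + α γ) and E(t) = ∫_{ℝᵈ} ψ(t)·((D/2)ψ(t) - αφ(t)) dx. Then for all t ∈ (0,T), E'(t) + δ ∫_{ℝᵈ}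 ψ |D∇_x ψ - α∇_x φ|² dx ≤ C₂ E(t) + α(C₂ + R₀) ∫_{ℝᵈ} ψ dx. -/
open MeasureTheory

open Set Filter

namespace S18


lemma pi_div_int_zero {n : ℕ} (G : (Fin (n+1) → ℝ) → (Fin (n+1) → ℝ))
    (hG : ContDiff ℝ 1 G) (hsupp : HasCompactSupport G) :
    ∫ y, ∑ i, fderiv ℝ G y (Pi.single i 1) i = 0 := by
  obtain ⟨R, hR0, hRs⟩ : ∃ R, 0 < R ∧ tsupport G ⊆ Metric.ball 0 R := by
    obtain ⟨R, hRs⟩ := hsupp.isBounded.subset_ball 0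
    exact ⟨max R 1, lt_of_lt_of_le one_pos (le_max_right _ _),
      hRs.trans (Metric.ball_subset_ball (le_max_left _ _))⟩
  set a : Fin (n+1) → ℝ := fun _ => -(R+1) with ha
  set b : Fin (n+1) → ℝ := fun _ => (R+1) with hb
  have hGz : ∀ x : Fin (n+1) → ℝ, R ≤ ‖x‖ → G x = 0 := by
    intro x hx
    refine image_eq_zero_of_notMem_tsupport fun h => ?_
    have := hRs h; rw [Metric.mem_ball, dist_zero_right] at this; linarith
  have hzero : ∀ x : Fin (n+1) → ℝ, R ≤ ‖x‖ → fderiv ℝ G x = 0 := by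
    intro x hx
    have hx' : x ∉ tsupport G := fun h => by
      have := hRs h; rw [Metric.mem_ball, dist_zero_right] at this; linarith
    exact Function.notMem_support.mp (fun hmem => hx' (support_fderiv_subset ℝ hmem))
  have hcont : Continuous fun x : Fin (n+1) → ℝ => ∑ i, fderiv ℝ G x (Pi.single i 1) i := by
    refine continuous_finset_sum _ fun i _ => ?_
    exact (continuous_apply i).comp ((hG.continuous_fderiv one_ne_zero).clm_apply continuous_const)
  have hcs : HasCompactSupport fun x : Fin (n+1) → ℝ =>
      ∑ i, fderiv ℝ G x (Pi.single i 1) i := by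
    refine hsupp.fderiv ℝ |>.mono' ?_
    intro x hx
    have : fderiv ℝ G x ≠ 0 := by
      intro h0
      apply hx
      simp [h0]
    exact subset_tsupport _ this
  have key := integral_divergence_of_hasFDerivAt_off_countable a b
    (fun i => by simp only [ha, hb]; linarith) G (fderiv ℝ G) ∅ countable_empty
    (hG.continuous.continuousOn)
    (fun x _ => (hG.differentiable one_ne_zero x).hasFDerivAt)
    ((hcont.integrable_of_hasCompactSupport hcs).integrableOn)
  rw [setIntegral_eq_integral_of_forall_compl_eq_zero ?h0] at key
  case h0 =>
    intro x hx
    have hnorm : R ≤ ‖x‖ := by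
      by_contra hn
      push_neg at hn
      apply hx
      rw [Set.mem_Icc]
      constructor <;> intro i <;>
      · have h1 : |x i| < R := lt_of_le_of_lt (by simpa using norm_le_pi_norm x i) hn
        have := abs_lt.mp h1
        simp only [ha, hb]
        linarith [this.1, this.2]
    simp [hzero x hnorm]
  rw [key]
  refine Finset.sum_eq_zero fun i _ => ?_
  have hface : ∀ (c : ℝ), R ≤ |c| → ∀ y : Fin n → ℝ, G (i.insertNth c y) i = 0 := by
    intro c hc y
    have h2 : |c| ≤ ‖(i.insertNth c y : Fin (n+1) → ℝ)‖ := by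
      have h3 := norm_le_pi_norm (i.insertNth c y : Fin (n+1) → ℝ) i
      simpa using h3
    have := hGz _ (le_trans hc h2)
    simp [this]
  rw [show (∫ x in Set.Icc (a ∘ i.succAbove) (b ∘ i.succAbove), G (i.insertNth (b i) x) i) = 0
    from integral_eq_zero_of_ae (Filter.Eventually.of_forall fun y =>
      hface (b i) (by simp only [hb]; rw [abs_of_nonneg] <;> linarith) y),
    show (∫ x in Set.Icc (a ∘ i.succAbove) (b ∘ i.succAbove), G (i.insertNth (a i) x) i) = 0
    from integral_eq_zero_of_ae (Filter.Eventually.of_forall fun y =>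
      hface (a i) (by simp only [ha]; rw [abs_of_nonpos] <;> linarith) y), sub_zero]


lemma ediv_int_zero {n : ℕ} (F : EuclideanSpace ℝ (Fin (n+1)) → EuclideanSpace ℝ (Fin (n+1)))
    (hF : ContDiff ℝ 1 F) (hsupp : HasCompactSupport F) : ∫ x, ediv F x = 0 := by
  set L : EuclideanSpace ℝ (Fin (n+1)) ≃L[ℝ] (Fin (n+1) → ℝ) :=
    PiLp.continuousLinearEquiv 2 ℝ (fun _ : Fin (n+1) => ℝ) with hL
  set G : (Fin (n+1) → ℝ) → (Fin (n+1) → ℝ) := fun y => L (F (L.symm y)) with hG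
  have hGc : ContDiff ℝ 1 G := L.contDiff.comp (hF.comp L.symm.contDiff)
  have hGs : HasCompactSupport G := by
    have h1 : HasCompactSupport (F ∘ L.symm) := hsupp.comp_homeomorph L.symm.toHomeomorph
    exact h1.comp_left (g := ⇑L) (by simp)
  have hsingle : ∀ i : Fin (n+1), (L.symm (Pi.single i 1) : EuclideanSpace ℝ (Fin (n+1)))
      = EuclideanSpace.single i (1:ℝ) := by
    intro i
    ext j
    simp [hL, EuclideanSpace.single_apply, Pi.single_apply]
  have hdiv : ∀ y, ∑ i, fderiv ℝ G y (Pi.single i 1) i = ediv F (L.symm y) := by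
    intro y
    have hd : DifferentiableAt ℝ F (L.symm y) := hF.differentiable one_ne_zero _
    have hfd : HasFDerivAt G
        ((L : (EuclideanSpace ℝ (Fin (n+1))) →L[ℝ] (Fin (n+1) → ℝ)).comp
          ((fderiv ℝ F (L.symm y)).comp
            (L.symm : (Fin (n+1) → ℝ) →L[ℝ] EuclideanSpace ℝ (Fin (n+1))))) y := by
      exact (L.hasFDerivAt.comp _ (hd.hasFDerivAt.comp _ L.symm.hasFDerivAt))
    rw [hfd.fderiv]
    unfold ediv
    refine Finset.sum_congr rfl fun i _ => ?_
    simp only [ContinuousLinearMap.coe_comp', Function.comp_apply,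
      ContinuousLinearEquiv.coe_coe, hsingle i]
    rfl
  have htrans : ∫ x, ediv F x = ∫ y, ediv F (L.symm y) := by
    have hmp : MeasurePreserving (MeasurableEquiv.toLp 2 (Fin (n+1) → ℝ)) :=
      (EuclideanSpace.volume_preserving_symm_measurableEquiv_toLp (Fin (n+1))).symm
    rw [← hmp.integral_comp (MeasurableEquiv.toLp 2 (Fin (n+1) → ℝ)).measurableEmbedding
      (fun x => ediv F x)]
    rfl
  rw [htrans, ← integral_congr_ae (Filter.Eventually.of_forall hdiv)]
  exact pi_div_int_zero G hGc hGs



variable {m : ℕ}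

lemma fderiv_inner (f : EuclideanSpace ℝ (Fin m) → ℝ) (x v : EuclideanSpace ℝ (Fin m)) :
    fderiv ℝ f x v = (inner ℝ (gradient f x) v : ℝ) := by
  rw [gradient, ← InnerProductSpace.toDual_apply_apply, LinearIsometryEquiv.apply_symm_apply]

lemma inner_eq_sum (u v : EuclideanSpace ℝ (Fin m)) :
    (inner ℝ u v : ℝ) = ∑ i, u i * v i := by
  simp [PiLp.inner_apply, RCLike.inner_apply, conj_trivial, mul_comm]

lemma gradient_apply (f : EuclideanSpace ℝ (Fin m) → ℝ) (x : EuclideanSpace ℝ (Fin m))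
    (i : Fin m) : gradient f x i = fderiv ℝ f x (EuclideanSpace.single i 1) := by
  rw [fderiv_inner, inner_eq_sum]
  simp [EuclideanSpace.single_apply]

lemma ediv_smul (w : EuclideanSpace ℝ (Fin m) → ℝ)
    (F : EuclideanSpace ℝ (Fin m) → EuclideanSpace ℝ (Fin m)) (x : EuclideanSpace ℝ (Fin m))
    (hw : DifferentiableAt ℝ w x) (hF : DifferentiableAt ℝ F x) :
    ediv (fun y => w y • F y) x = (inner ℝ (gradient w x) (F x) : ℝ) + w x * ediv F x := by
  have h := fderiv_fun_smul hw hF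
  unfold ediv
  rw [h, inner_eq_sum, Finset.mul_sum, ← Finset.sum_add_distrib]
  refine Finset.sum_congr rfl fun i _ => ?_
  simp only [ContinuousLinearMap.add_apply, ContinuousLinearMap.coe_smul',
    ContinuousLinearMap.smulRight_apply, Pi.smul_apply, PiLp.add_apply, PiLp.smul_apply,
    smul_eq_mul]
  rw [gradient_apply]
  ring

lemma gradient_combination (c₁ c₂ : ℝ) (p q : EuclideanSpace ℝ (Fin m) → ℝ)
    (x : EuclideanSpace ℝ (Fin m)) (hp : DifferentiableAt ℝ p x) (hq : DifferentiableAt ℝ q x) :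
    gradient (fun y => c₁ * p y - c₂ * q y) x = c₁ • gradient p x - c₂ • gradient q x := by
  unfold gradient
  rw [fderiv_fun_sub ((hp.const_mul c₁)) ((hq.const_mul c₂)), fderiv_const_mul hp c₁,
    fderiv_const_mul hq c₂, map_sub, _root_.map_smul, _root_.map_smul]

lemma ediv_continuous {F : EuclideanSpace ℝ (Fin m) → EuclideanSpace ℝ (Fin m)}
    (hF : ContDiff ℝ 1 F) : Continuous (ediv F) := by
  refine continuous_finset_sum _ fun i _ => ?_
  exact (continuous_apply i).comp ((PiLp.continuous_ofLp 2 _).comp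
    ((hF.continuous_fderiv one_ne_zero).clm_apply continuous_const))

lemma ediv_zero_of_locally_zero {F : EuclideanSpace ℝ (Fin m) → EuclideanSpace ℝ (Fin m)}
    {x : EuclideanSpace ℝ (Fin m)} (h : F =ᶠ[nhds x] 0) : ediv F x = 0 := by
  unfold ediv
  have : fderiv ℝ (0 : EuclideanSpace ℝ (Fin m) → EuclideanSpace ℝ (Fin m)) x = 0 := by
    rw [show (0 : EuclideanSpace ℝ (Fin m) → EuclideanSpace ℝ (Fin m)) = fun _ => 0 from rfl,
      fderiv_fun_const]
    rfl
  rw [h.fderiv_eq, this]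
  simp

lemma slice_contDiff {f : ℝ × EuclideanSpace ℝ (Fin m) → ℝ} {T t : ℝ}
    (hf : ContDiffOn ℝ 2 f (Set.Icc 0 T ×ˢ Set.univ)) (ht : t ∈ Set.Ioo 0 T) :
    ContDiff ℝ 2 fun x => f (t, x) := by
  rw [contDiff_iff_contDiffAt]
  intro x
  have hU : IsOpen (Set.Ioo (0:ℝ) T ×ˢ (Set.univ : Set (EuclideanSpace ℝ (Fin m)))) :=
    isOpen_Ioo.prod isOpen_univ
  have h1 : ContDiffAt ℝ 2 f (t, x) :=
    (hf.mono (Set.prod_mono Set.Ioo_subset_Icc_self subset_rfl)).contDiffAt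
      (hU.mem_nhds (by simp [ht.1, ht.2]))
  exact h1.comp x ((contDiff_const.prodMk contDiff_id).contDiffAt)

lemma contDiffAt_of_U {f : ℝ × EuclideanSpace ℝ (Fin m) → ℝ} {T s : ℝ}
    (hf : ContDiffOn ℝ 2 f (Set.Icc 0 T ×ˢ Set.univ)) (hs : s ∈ Set.Ioo 0 T)
    (x : EuclideanSpace ℝ (Fin m)) : ContDiffAt ℝ 2 f (s, x) := by
  have hU : IsOpen (Set.Ioo (0:ℝ) T ×ˢ (Set.univ : Set (EuclideanSpace ℝ (Fin m)))) :=
    isOpen_Ioo.prod isOpen_univ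
  exact (hf.mono (Set.prod_mono Set.Ioo_subset_Icc_self subset_rfl)).contDiffAt
    (hU.mem_nhds (by simp [hs.1, hs.2]))

lemma slice_hasDerivAt {f : ℝ × EuclideanSpace ℝ (Fin m) → ℝ} {s : ℝ}
    {x : EuclideanSpace ℝ (Fin m)} (h : ContDiffAt ℝ 2 f (s, x)) :
    HasDerivAt (fun u => f (u, x)) (fderiv ℝ f (s, x) (1, 0)) s := by
  have hd := (h.differentiableAt (by norm_num)).hasFDerivAt
  have hslice : HasDerivAt (fun u : ℝ => (u, x)) ((1:ℝ), (0 : EuclideanSpace ℝ (Fin m))) s :=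
    (hasDerivAt_id s).prodMk (hasDerivAt_const s x)
  exact hd.comp_hasDerivAt s hslice

lemma integrable_of_supp {f : EuclideanSpace ℝ (Fin m) → ℝ} {K : Set (EuclideanSpace ℝ (Fin m))}
    (hK : IsCompact K) (hf : Continuous f) (h : ∀ x ∉ K, f x = 0) : Integrable f :=
  hf.integrable_of_hasCompactSupport (HasCompactSupport.intro hK h)

lemma gradient_contDiff {p : EuclideanSpace ℝ (Fin m) → ℝ} (hp : ContDiff ℝ 2 p) :
    ContDiff ℝ 1 (gradient p) := by
  have h1 : ContDiff ℝ 1 (fderiv ℝ p) := hp.fderiv_right (by norm_num)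
  exact (InnerProductSpace.toDual ℝ (EuclideanSpace ℝ (Fin m))).symm.contDiff.comp h1


lemma key_ineq (D α γ R₀ C₂ u v : ℝ) (hD : 0 < D) (hα : 0 < α) (hγ : 0 < γ) (hR : 0 < R₀)
    (hC₂D : C₂ * D = 2 * (D * R₀ + α * R₀ + α * γ)) (hC₂0 : 0 ≤ C₂)
    (h1 : 0 ≤ u) (h2 : 0 ≤ v) (h3 : v ≤ 1) :
    R₀ * u * (1 - v - u) * (D * u - α * v) + α * γ * v * u^2 ≤
      C₂ * (u * (D / 2 * u - α * v)) + α * (C₂ + R₀) * u := by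
  have h5 : (0:ℝ) ≤ 1 - v := by linarith
  have h6 : R₀ * u * (1 - v - u) * (D * u - α * v) + α * γ * v * u^2 ≤
      (R₀ * D + R₀ * α + α * γ) * u^2 := by
    nlinarith [mul_nonneg (mul_pos hR hD).le (mul_nonneg (mul_nonneg h1 h1) h2),
      mul_nonneg (mul_pos hR hα).le (mul_nonneg (mul_nonneg h1 h2) h5),
      mul_nonneg (mul_pos hR hD).le (mul_nonneg (mul_nonneg h1 h1) h1),
      mul_nonneg (mul_pos hR hα).le (mul_nonneg (mul_nonneg h1 h1) h5),
      mul_nonneg (mul_pos hα hγ).le (mul_nonneg (mul_nonneg h1 h1) h5)]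
  have h7 : (R₀ * D + R₀ * α + α * γ) * u^2 ≤
      C₂ * (u * (D / 2 * u - α * v)) + α * (C₂ + R₀) * u := by
    nlinarith [hC₂D, sq_nonneg u,
      mul_nonneg (mul_nonneg hα.le hC₂0) (mul_nonneg h1 h5),
      mul_nonneg (mul_pos hα hR).le h1]
  linarith

end S18

set_option maxHeartbeats 1000000 in
/-- Perturbed energy inequality (Step 1 of Proposition 3): for a compactly
supported classical solution of the δ-perturbed system
`∂ₜψ + ∇·[ψ(δ + φ(1-φ))(α∇φ - D∇ψ)] = R₀ψ(1-φ-ψ)`, `∂ₜφ = -γφψ`,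
with `ψ ≥ 0`, `0 ≤ φ ≤ 1`, `C₂ = (2/D)(DR₀ + αR₀ + αγ)` and
`E(t) = ∫ ψ((D/2)ψ - αφ)`, one has
`E'(t) + δ ∫ ψ|D∇ψ - α∇φ|² ≤ C₂ E(t) + α(C₂ + R₀) ∫ ψ` for `t ∈ (0,T)`. -/
theorem stmt_18 (d : ℕ) (hd : d = 1 ∨ d = 2 ∨ d = 3) (T γ α D R₀ δ : ℝ)
    (hT : 0 < T) (hγ : 0 < γ) (hα : 0 < α) (hD : 0 < D) (hR : 0 < R₀) (hδ : 0 < δ)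
    (ψ φ : ℝ × EuclideanSpace ℝ (Fin d) → ℝ)
    (hψC2 : ContDiffOn ℝ 2 ψ (Set.Icc 0 T ×ˢ Set.univ))
    (hφC2 : ContDiffOn ℝ 2 φ (Set.Icc 0 T ×ˢ Set.univ))
    (hψnn : ∀ t ∈ Set.Icc (0 : ℝ) T, ∀ x, 0 ≤ ψ (t, x))
    (hφ01 : ∀ t ∈ Set.Icc (0 : ℝ) T, ∀ x, 0 ≤ φ (t, x) ∧ φ (t, x) ≤ 1)
    (K : Set (EuclideanSpace ℝ (Fin d))) (hK : IsCompact K)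
    (hsupp : ∀ t ∈ Set.Icc (0 : ℝ) T, (Function.support fun x => ψ (t, x)) ⊆ K)
    (hpde1 : ∀ t ∈ Set.Ioo (0 : ℝ) T, ∀ x,
      deriv (fun s => ψ (s, x)) t +
        ediv (fun y => (ψ (t, y) * (δ + φ (t, y) * (1 - φ (t, y)))) •
          (α • gradient (fun z => φ (t, z)) y - D • gradient (fun z => ψ (t, z)) y)) x
        = R₀ * ψ (t, x) * (1 - φ (t, x) - ψ (t, x)))
    (hpde2 : ∀ t ∈ Set.Ioo (0 : ℝ) T, ∀ x,
      deriv (fun s => φ (s, x)) t = -γ * φ (t, x) * ψ (t, x))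
    (C₂ : ℝ) (hC₂ : C₂ = 2 / D * (D * R₀ + α * R₀ + α * γ))
    (E : ℝ → ℝ) (hE : ∀ τ, E τ = ∫ x, ψ (τ, x) * (D / 2 * ψ (τ, x) - α * φ (τ, x))) :
    ∀ t ∈ Set.Ioo (0 : ℝ) T,
      DifferentiableAt ℝ E t ∧
      deriv E t + δ * (∫ x, ψ (t, x) *
          ‖D • gradient (fun z => ψ (t, z)) x - α • gradient (fun z => φ (t, z)) x‖ ^ 2)
        ≤ C₂ * E t + α * (C₂ + R₀) * ∫ x, ψ (t, x) := by
  intro t ht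
  obtain ⟨n, rfl⟩ : ∃ n, d = n + 1 := by rcases hd with h|h|h <;> subst h <;> exact ⟨_, rfl⟩
  have htIcc : t ∈ Set.Icc (0:ℝ) T := Set.Ioo_subset_Icc_self ht
  have hpC : ContDiff ℝ 2 (fun x => ψ (t, x)) := S18.slice_contDiff hψC2 ht
  have hqC : ContDiff ℝ 2 (fun x => φ (t, x)) := S18.slice_contDiff hφC2 ht
  have hψK : ∀ x, x ∉ K → ψ (t, x) = 0 := fun x hx => by
    by_contra h; exact hx (hsupp t htIcc h)
  have hψ0 : ∀ x, 0 ≤ ψ (t, x) := hψnn t htIcc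
  have hφ01t : ∀ x, 0 ≤ φ (t, x) ∧ φ (t, x) ≤ 1 := hφ01 t htIcc
  set g1 : EuclideanSpace ℝ (Fin (n+1)) → EuclideanSpace ℝ (Fin (n+1)) :=
    gradient (fun z => ψ (t, z)) with hg1
  set g2 : EuclideanSpace ℝ (Fin (n+1)) → EuclideanSpace ℝ (Fin (n+1)) :=
    gradient (fun z => φ (t, z)) with hg2
  have hg1C : ContDiff ℝ 1 g1 := S18.gradient_contDiff hpC
  have hg2C : ContDiff ℝ 1 g2 := S18.gradient_contDiff hqC
  set Fl : EuclideanSpace ℝ (Fin (n+1)) → EuclideanSpace ℝ (Fin (n+1)) :=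
    fun y => (ψ (t, y) * (δ + φ (t, y) * (1 - φ (t, y)))) • (α • g2 y - D • g1 y) with hFl
  have hFlC : ContDiff ℝ 1 Fl := by
    refine ContDiff.smul (𝕜' := ℝ) ?_ ?_
    · exact (hpC.of_le one_le_two).mul
        (contDiff_const.add ((hqC.of_le one_le_two).mul
          (contDiff_const.sub (hqC.of_le one_le_two))))
    · exact (hg2C.const_smul α).sub (hg1C.const_smul D)
  have hFlz : ∀ y, y ∉ K → Fl y = 0 := by
    intro y hy; simp [hFl, hψK y hy]
  have hedivFlz : ∀ x, x ∉ K → ediv Fl x = 0 := by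
    intro x hx
    refine S18.ediv_zero_of_locally_zero ?_
    filter_upwards [hK.isClosed.isOpen_compl.mem_nhds hx] with y hy
    exact hFlz y hy
  have hedivFlc : Continuous (ediv Fl) := S18.ediv_continuous hFlC
  -- integrability helper
  have hint : ∀ (f : EuclideanSpace ℝ (Fin (n+1)) → ℝ), Continuous f →
      (∀ x, x ∉ K → f x = 0) → Integrable f :=
    fun f hc h0 => S18.integrable_of_supp hK hc h0
  -- PDE at time t in fderiv form
  have hP1 : ∀ x, fderiv ℝ ψ (t, x) (1, 0) =
      R₀ * ψ (t, x) * (1 - φ (t, x) - ψ (t, x)) - ediv Fl x := by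
    intro x
    have hda := S18.slice_hasDerivAt (S18.contDiffAt_of_U hψC2 ht x)
    have h1 := hpde1 t ht x
    rw [hda.deriv] at h1
    rw [hg1, hg2] at hFl
    rw [← hFl] at h1
    linarith
  have hP2 : ∀ x, fderiv ℝ φ (t, x) (1, 0) = -γ * φ (t, x) * ψ (t, x) := by
    intro x
    have hda := S18.slice_hasDerivAt (S18.contDiffAt_of_U hφC2 ht x)
    have h2 := hpde2 t ht x
    rw [hda.deriv] at h2
    exact h2

  -- DUIS
  set Fam : ℝ → EuclideanSpace ℝ (Fin (n+1)) → ℝ :=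
    fun s x => ψ (s, x) * (D / 2 * ψ (s, x) - α * φ (s, x)) with hFam
  set Fam' : ℝ → EuclideanSpace ℝ (Fin (n+1)) → ℝ :=
    fun s x => fderiv ℝ ψ (s, x) (1, 0) * (D * ψ (s, x) - α * φ (s, x))
      - α * ψ (s, x) * fderiv ℝ φ (s, x) (1, 0) with hFam'
  obtain ⟨ε, hε0, hball⟩ : ∃ ε > 0, Metric.closedBall t ε ⊆ Set.Ioo 0 T := by
    have h1 : 0 < min t (T - t) := lt_min ht.1 (by linarith [ht.2])
    refine ⟨min t (T - t) / 2, by linarith, ?_⟩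
    intro s hs
    rw [Metric.mem_closedBall, Real.dist_eq, abs_le] at hs
    constructor <;>
      [linarith [min_le_left t (T - t), hs.1]; linarith [min_le_right t (T - t), hs.2]]
  have hballIoo : ∀ s ∈ Metric.ball t ε, s ∈ Set.Ioo (0:ℝ) T :=
    fun s hs => hball (Metric.ball_subset_closedBall hs)
  have hdiffFam : ∀ x, ∀ s ∈ Metric.ball t ε, HasDerivAt (fun u => Fam u x) (Fam' s x) s := by
    intro x s hs
    have hsI := hballIoo s hs
    have hψs := S18.slice_hasDerivAt (S18.contDiffAt_of_U hψC2 hsI x)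
    have hφs := S18.slice_hasDerivAt (S18.contDiffAt_of_U hφC2 hsI x)
    have h : HasDerivAt (fun u => ψ (u, x) * (D/2 * ψ (u, x) - α * φ (u, x)))
        (fderiv ℝ ψ (s, x) (1, 0) * (D/2 * ψ (s, x) - α * φ (s, x)) +
          ψ (s, x) * (D/2 * fderiv ℝ ψ (s, x) (1, 0) - α * fderiv ℝ φ (s, x) (1, 0))) s :=
      hψs.mul ((hψs.const_mul (D/2)).sub (hφs.const_mul α))
    convert h using 1
    simp only [hFam']
    ring
  have hFam'zero : ∀ x, x ∉ K → ∀ s ∈ Metric.ball t ε, Fam' s x = 0 := by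
    intro x hx s hs
    have hsI := hballIoo s hs
    have hψz : ∀ u ∈ Set.Ioo (0:ℝ) T, ψ (u, x) = 0 := by
      intro u hu
      by_contra h
      exact hx (hsupp u (Set.Ioo_subset_Icc_self hu) h)
    have hψs := S18.slice_hasDerivAt (S18.contDiffAt_of_U hψC2 hsI x)
    have hz : (fun u => ψ (u, x)) =ᶠ[nhds s] fun _ => (0:ℝ) := by
      filter_upwards [isOpen_Ioo.mem_nhds hsI] with u hu
      exact hψz u hu
    have h0 : HasDerivAt (fun u => ψ (u, x)) 0 s :=
      (hasDerivAt_const s (0:ℝ)).congr_of_eventuallyEq hz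
    have : fderiv ℝ ψ (s, x) (1, 0) = 0 := hψs.unique h0
    simp [hFam', this, hψz s hsI]
  -- bound
  obtain ⟨C, hC⟩ : ∃ C, ∀ pr ∈ Set.Icc (t-ε) (t+ε) ×ˢ K,
      ‖fderiv ℝ ψ pr (1, 0) * (D * ψ pr - α * φ pr) - α * ψ pr * fderiv ℝ φ pr (1, 0)‖ ≤ C := by
    refine (IsCompact.exists_bound_of_continuousOn ((isCompact_Icc).prod hK) ?_)
    have hU : IsOpen (Set.Ioo (0:ℝ) T ×ˢ (Set.univ : Set (EuclideanSpace ℝ (Fin (n+1))))) :=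
      isOpen_Ioo.prod isOpen_univ
    have hsub : Set.Icc (t-ε) (t+ε) ×ˢ K ⊆
        Set.Ioo (0:ℝ) T ×ˢ (Set.univ : Set (EuclideanSpace ℝ (Fin (n+1)))) := by
      refine Set.prod_mono ?_ (Set.subset_univ _)
      intro s hs
      exact hball (by rwa [Real.closedBall_eq_Icc])
    have hψf : ContinuousOn (fun pr : ℝ × EuclideanSpace ℝ (Fin (n+1)) => fderiv ℝ ψ pr (1,0))
        (Set.Ioo (0:ℝ) T ×ˢ Set.univ) := by
      exact ((hψC2.mono (Set.prod_mono Set.Ioo_subset_Icc_self subset_rfl)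
        ).continuousOn_fderiv_of_isOpen hU one_le_two).clm_apply continuousOn_const
    have hφf : ContinuousOn (fun pr : ℝ × EuclideanSpace ℝ (Fin (n+1)) => fderiv ℝ φ pr (1,0))
        (Set.Ioo (0:ℝ) T ×ˢ Set.univ) := by
      exact ((hφC2.mono (Set.prod_mono Set.Ioo_subset_Icc_self subset_rfl)
        ).continuousOn_fderiv_of_isOpen hU one_le_two).clm_apply continuousOn_const
    have hψc : ContinuousOn ψ (Set.Ioo (0:ℝ) T ×ˢ Set.univ) :=
      (hψC2.mono (Set.prod_mono Set.Ioo_subset_Icc_self subset_rfl)).continuousOn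
    have hφc : ContinuousOn φ (Set.Ioo (0:ℝ) T ×ˢ Set.univ) :=
      (hφC2.mono (Set.prod_mono Set.Ioo_subset_Icc_self subset_rfl)).continuousOn
    exact ((hψf.mul ((hψc.const_smul D).sub (hφc.const_smul α))).sub
      (((hψc.const_smul α)).mul hφf)).mono hsub
  set bound : EuclideanSpace ℝ (Fin (n+1)) → ℝ := K.indicator (fun _ => C) with hbound
  have hbound_int : Integrable bound := by
    rw [hbound, integrable_indicator_iff hK.measurableSet]
    exact integrableOn_const hK.measure_lt_top.ne
  have h_bound : ∀ᵐ x : EuclideanSpace ℝ (Fin (n+1)), ∀ s ∈ Metric.ball t ε,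
      ‖Fam' s x‖ ≤ bound x := by
    refine Filter.Eventually.of_forall fun x s hs => ?_
    by_cases hx : x ∈ K
    · rw [hbound, Set.indicator_of_mem hx]
      refine hC (s, x) ⟨?_, hx⟩
      have h2 := Metric.ball_subset_closedBall hs
      rwa [Real.closedBall_eq_Icc] at h2
    · rw [hbound, Set.indicator_of_notMem hx, hFam'zero x hx s hs]
      simp
  have hF_meas : ∀ᶠ s in nhds t, AEStronglyMeasurable (Fam s) volume := by
    filter_upwards [isOpen_Ioo.mem_nhds ht] with s hs
    exact (((S18.slice_contDiff hψC2 hs).continuous).mul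
      ((continuous_const.mul (S18.slice_contDiff hψC2 hs).continuous).sub
        (continuous_const.mul (S18.slice_contDiff hφC2 hs).continuous))).aestronglyMeasurable
  have hFam_t_cont : Continuous (Fam t) :=
    (hpC.continuous).mul
      ((continuous_const.mul hpC.continuous).sub (continuous_const.mul hqC.continuous))
  have hF_int : Integrable (Fam t) :=
    hint _ hFam_t_cont (fun x hx => by simp [hFam, hψK x hx])
  have hFam'_t_cont : Continuous (Fam' t) := by
    have hU : IsOpen (Set.Ioo (0:ℝ) T ×ˢ (Set.univ : Set (EuclideanSpace ℝ (Fin (n+1))))) :=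
      isOpen_Ioo.prod isOpen_univ
    have hψf : Continuous (fun x : EuclideanSpace ℝ (Fin (n+1)) => fderiv ℝ ψ (t, x) (1,0)) := by
      refine ContinuousOn.comp_continuous
        (((hψC2.mono (Set.prod_mono Set.Ioo_subset_Icc_self subset_rfl)
          ).continuousOn_fderiv_of_isOpen hU one_le_two).clm_apply continuousOn_const)
        (Continuous.prodMk continuous_const continuous_id) (fun x => by simp [ht.1, ht.2])
    have hφf : Continuous (fun x : EuclideanSpace ℝ (Fin (n+1)) => fderiv ℝ φ (t, x) (1,0)) := by
      refine ContinuousOn.comp_continuous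
        (((hφC2.mono (Set.prod_mono Set.Ioo_subset_Icc_self subset_rfl)
          ).continuousOn_fderiv_of_isOpen hU one_le_two).clm_apply continuousOn_const)
        (Continuous.prodMk continuous_const continuous_id) (fun x => by simp [ht.1, ht.2])
    exact (hψf.mul ((continuous_const.mul hpC.continuous).sub
      (continuous_const.mul hqC.continuous))).sub
      ((continuous_const.mul hpC.continuous).mul hφf)
  have hDUIS := hasDerivAt_integral_of_dominated_loc_of_deriv_le (Metric.ball_mem_nhds t hε0) hF_meas hF_int
    hFam'_t_cont.aestronglyMeasurable h_bound hbound_int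
    (Filter.Eventually.of_forall fun x s hs => hdiffFam x s hs)
  have hEeq : E = fun s => ∫ x, Fam s x := funext hE
  have hE' : HasDerivAt E (∫ x, Fam' t x) t := by rw [hEeq]; exact hDUIS.2
  refine ⟨hE'.differentiableAt, ?_⟩
  rw [hE'.deriv]

  -- IBP
  set w : EuclideanSpace ℝ (Fin (n+1)) → ℝ := fun y => D * ψ (t, y) - α * φ (t, y) with hw
  have hwC : ContDiff ℝ 1 w :=
    (contDiff_const.mul (hpC.of_le one_le_two)).sub (contDiff_const.mul (hqC.of_le one_le_two))
  have hGC : ContDiff ℝ 1 (fun y => w y • Fl y) := hwC.smul hFlC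
  have hGs : HasCompactSupport (fun y => w y • Fl y) :=
    HasCompactSupport.intro hK (fun x hx => by simp [hFlz x hx])
  have hprod : ∀ y, ediv (fun z => w z • Fl z) y = w y * ediv Fl y -
      ψ (t, y) * (δ + φ (t, y) * (1 - φ (t, y))) * ‖D • g1 y - α • g2 y‖^2 := by
    intro y
    rw [S18.ediv_smul w Fl y (hwC.differentiable one_ne_zero y) (hFlC.differentiable one_ne_zero y)]
    have hgw : gradient w y = D • g1 y - α • g2 y := by
      rw [hg1, hg2, hw]
      exact S18.gradient_combination D α _ _ y
        ((hpC.differentiable two_ne_zero) y) ((hqC.differentiable two_ne_zero) y)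
    have hFly : Fl y = (ψ (t, y) * (δ + φ (t, y) * (1 - φ (t, y)))) • (α • g2 y - D • g1 y) := rfl
    rw [hgw, hFly, real_inner_smul_right, ← neg_sub (D • g1 y) (α • g2 y), inner_neg_right,
      real_inner_self_eq_norm_sq]
    ring
  have hnsqc : Continuous fun x : EuclideanSpace ℝ (Fin (n+1)) => ‖D • g1 x - α • g2 x‖^2 :=
    (((hg1C.continuous.const_smul D).sub (hg2C.continuous.const_smul α)).norm.pow 2)
  have hSint : Integrable (fun x =>
      ψ (t, x) * (δ + φ (t, x) * (1 - φ (t, x))) * ‖D • g1 x - α • g2 x‖^2) := by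
    refine hint _ ?_ (fun x hx => by simp [hψK x hx])
    exact ((hpC.continuous.mul (continuous_const.add
      (hqC.continuous.mul (continuous_const.sub hqC.continuous)))).mul hnsqc)
  have hWint : Integrable (fun x => w x * ediv Fl x) :=
    hint _ (hwC.continuous.mul hedivFlc) (fun x hx => by simp [hedivFlz x hx])
  have hIBP : ∫ x, w x * ediv Fl x =
      ∫ x, ψ (t, x) * (δ + φ (t, x) * (1 - φ (t, x))) * ‖D • g1 x - α • g2 x‖^2 := by
    have h3 := S18.ediv_int_zero _ hGC hGs
    rw [integral_congr_ae (Filter.Eventually.of_forall hprod), integral_sub hWint hSint] at h3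
    linarith
  -- rewrite the derivative integrand
  set A : EuclideanSpace ℝ (Fin (n+1)) → ℝ := fun x =>
    R₀ * ψ (t, x) * (1 - φ (t, x) - ψ (t, x)) * (D * ψ (t, x) - α * φ (t, x))
      + α * γ * φ (t, x) * ψ (t, x)^2 with hA
  have hFam'A : ∀ x, Fam' t x = A x - w x * ediv Fl x := by
    intro x
    simp only [hFam', hA, hw]
    rw [hP1 x, hP2 x]
    ring
  have hAint : Integrable A := by
    refine hint _ ?_ (fun x hx => by simp [hA, hψK x hx])
    refine Continuous.add ?_ ?_
    · exact ((continuous_const.mul hpC.continuous).mul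
        ((continuous_const.sub hqC.continuous).sub hpC.continuous)).mul
        ((continuous_const.mul hpC.continuous).sub (continuous_const.mul hqC.continuous))
    · exact (continuous_const.mul hqC.continuous).mul (hpC.continuous.pow 2)
  have hsplit : ∫ x, Fam' t x = (∫ x, A x) - ∫ x, w x * ediv Fl x := by
    rw [integral_congr_ae (Filter.Eventually.of_forall hFam'A), integral_sub hAint hWint]
  -- estimates
  have hψint : Integrable (fun x => ψ (t, x)) := hint _ hpC.continuous hψK
  have hI1int : Integrable (fun x => ψ (t, x) * ‖D • g1 x - α • g2 x‖^2) :=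
    hint _ (hpC.continuous.mul hnsqc) (fun x hx => by simp [hψK x hx])
  have hδle : δ * (∫ x, ψ (t, x) * ‖D • g1 x - α • g2 x‖^2) ≤
      ∫ x, ψ (t, x) * (δ + φ (t, x) * (1 - φ (t, x))) * ‖D • g1 x - α • g2 x‖^2 := by
    rw [← integral_const_mul]
    refine integral_mono (hI1int.const_mul δ) hSint fun x => ?_
    have h1 := hψ0 x
    have h2 := (hφ01t x).1
    have h3 := (hφ01t x).2
    have h4 : (0:ℝ) ≤ ‖D • g1 x - α • g2 x‖^2 := by positivity
    nlinarith [mul_nonneg (mul_nonneg h1 (mul_nonneg h2 (by linarith : (0:ℝ) ≤ 1 - φ (t, x)))) h4]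
  have hC₂D : C₂ * D = 2 * (D * R₀ + α * R₀ + α * γ) := by
    rw [hC₂]; field_simp
  have hC₂0 : 0 ≤ C₂ := by rw [hC₂]; positivity
  have hAle : (∫ x, A x) ≤ C₂ * E t + α * (C₂ + R₀) * ∫ x, ψ (t, x) := by
    have hRint : Integrable (fun x => C₂ * Fam t x + α * (C₂ + R₀) * ψ (t, x)) :=
      (hF_int.const_mul C₂).add (hψint.const_mul _)
    have hmono := integral_mono hAint hRint ?ptwise
    case ptwise =>
      intro x
      simp only [hA, hFam]
      exact S18.key_ineq D α γ R₀ C₂ (ψ (t, x)) (φ (t, x)) hD hα hγ hR hC₂D hC₂0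
        (hψ0 x) (hφ01t x).1 (hφ01t x).2
    rw [integral_add (hF_int.const_mul C₂) (hψint.const_mul _), integral_const_mul,
      integral_const_mul, ← hE t] at hmono
    exact hmono
  linarith [hsplit, hIBP, hδle, hAle]
end
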